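/- arXiv:1812.04276 — 9 statements merged into one kernel-verified Lean document; each statement's English description precedes it below -/
import Mathlib

section
/- Let a ∈ ℝⁿ \ {0}, b ∈ ℝ, γ > 0, μ > 0, and let B(u) = −ln(b − aᵀu) if aᵀu < b and B(u) = +∞ otherwise. Then for every x ∈ ℝⁿ, the unique minimizer over u ∈ ℝⁿ of (1/2)‖x − u‖² + γμ B(u) is φ(x, μ, γ) = x + ((b − aᵀx − √((b − aᵀx)² + 4γμ‖a‖²)) / (2‖a‖²)) a. -/
open scoped InnerProductSpace

/-- Logarithmic barrier of the half-space `{u : ⟪a,u⟫ ≤ b}`. -/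
noncomputable def affineBarrier {n : ℕ} (a : EuclideanSpace ℝ (Fin n)) (b : ℝ)
    (u : EuclideanSpace ℝ (Fin n)) : EReal :=
  if ⟪a, u⟫_ℝ < b then ((- Real.log (b - ⟪a, u⟫_ℝ) : ℝ) : EReal) else ⊤

/-- The objective `u ↦ (1/2)‖x-u‖² + γμ B(u)` defining `prox_{γμB}(x)`. -/
noncomputable def affineProxObj {n : ℕ} (a : EuclideanSpace ℝ (Fin n)) (b γ μ : ℝ)
    (x u : EuclideanSpace ℝ (Fin n)) : EReal :=
  ((1 / 2 * ‖x - u‖ ^ 2 : ℝ) : EReal) + ((γ * μ : ℝ) : EReal) * affineBarrier a b u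

/-! The point `p = x + t • a`, with `t` the negative root of `A t² - s t - κ = 0`
(`A = ‖a‖²`, `s = b - ⟪a, x⟫`, `κ = γμ`), satisfies the optimality condition
`x - p = κ ∇B(p)`, i.e. `t (b - ⟪a, p⟫) = -κ`. Against this condition the objective splits as
`f u - f p = ½‖u - p‖² + κ (y - 1 - log y)` with `y = (b - ⟪a, u⟫) / (b - ⟪a, p⟫)`,
and both terms are nonnegative, the first one positive for `u ≠ p`. -/

theorem pos_sub_mul_and_mul_sub_mul_eq_of_neg_root {A s κ t : ℝ} (hA : 0 < A) (hκ : 0 < κ)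
    (ht : t = (s - Real.sqrt (s ^ 2 + 4 * κ * A)) / (2 * A)) :
    0 < s - t * A ∧ t * (s - t * A) = -κ := by
  have hdisc : 0 ≤ s ^ 2 + 4 * κ * A := by positivity
  have hD := Real.sq_sqrt hdisc
  have hs : |s| < Real.sqrt (s ^ 2 + 4 * κ * A) :=
    (Real.lt_sqrt (abs_nonneg s)).mpr (by rw [sq_abs]; nlinarith)
  have htA : t * A = (s - Real.sqrt (s ^ 2 + 4 * κ * A)) / 2 := by
    rw [ht]; field_simp
  have hprod : t * A * (s - t * A) = -κ * A := by
    rw [htA]; linear_combination (-1 / 4 : ℝ) * hD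
  constructor
  · linarith [neg_abs_le s]
  · exact mul_right_cancel₀ hA.ne' (by linear_combination hprod)

section HalfSpaceBarrier

variable {E : Type*} [NormedAddCommGroup E] [InnerProductSpace ℝ E]

theorem norm_sub_sq_eq_of_stationary {a x p u : E} {b t κ : ℝ} (hcp : b - ⟪a, p⟫_ℝ ≠ 0)
    (hpx : p = x + t • a) (hstat : t * (b - ⟪a, p⟫_ℝ) = -κ) :
    ‖x - u‖ ^ 2 = ‖x - p‖ ^ 2
      + 2 * κ * ((b - ⟪a, u⟫_ℝ) / (b - ⟪a, p⟫_ℝ) - 1) + ‖u - p‖ ^ 2 := by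
  have hinner : ⟪x - p, u - p⟫_ℝ = -κ * ((b - ⟪a, u⟫_ℝ) / (b - ⟪a, p⟫_ℝ) - 1) := by
    have hxp : x - p = -t • a := by rw [hpx]; module
    rw [hxp, real_inner_smul_left, inner_sub_right]
    field_simp
    linear_combination (⟪a, p⟫_ℝ - ⟪a, u⟫_ℝ) * hstat
  have hsplit : x - u = (x - p) - (u - p) := by abel
  rw [hsplit, norm_sub_sq_real, hinner]
  ring

theorem half_sq_sub_log_lt_of_stationary {a x p u : E} {b t κ : ℝ} (hκ : 0 ≤ κ)
    (hp : ⟪a, p⟫_ℝ < b) (hu : ⟪a, u⟫_ℝ < b) (hpx : p = x + t • a)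
    (hstat : t * (b - ⟪a, p⟫_ℝ) = -κ) (hne : u ≠ p) :
    1 / 2 * ‖x - p‖ ^ 2 + κ * -Real.log (b - ⟪a, p⟫_ℝ)
      < 1 / 2 * ‖x - u‖ ^ 2 + κ * -Real.log (b - ⟪a, u⟫_ℝ) := by
  have hcp : 0 < b - ⟪a, p⟫_ℝ := by linarith
  have hcu : 0 < b - ⟪a, u⟫_ℝ := by linarith
  have hlog : Real.log (b - ⟪a, u⟫_ℝ) - Real.log (b - ⟪a, p⟫_ℝ)
      ≤ (b - ⟪a, u⟫_ℝ) / (b - ⟪a, p⟫_ℝ) - 1 := by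
    rw [← Real.log_div hcu.ne' hcp.ne']
    exact Real.log_le_sub_one_of_pos (div_pos hcu hcp)
  have hdist : 0 < ‖u - p‖ ^ 2 := by
    have := norm_pos_iff.mpr (sub_ne_zero.mpr hne)
    positivity
  rw [norm_sub_sq_eq_of_stationary (u := u) hcp.ne' hpx hstat]
  linarith [mul_le_mul_of_nonneg_left hlog hκ]

end HalfSpaceBarrier

section ProxObjective

variable {n : ℕ} {a x u : EuclideanSpace ℝ (Fin n)} {b γ μ : ℝ}

theorem affineProxObj_of_lt (hu : ⟪a, u⟫_ℝ < b) :
    affineProxObj a b γ μ x u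
      = ((1 / 2 * ‖x - u‖ ^ 2 + γ * μ * -Real.log (b - ⟪a, u⟫_ℝ) : ℝ) : EReal) := by
  rw [affineProxObj, affineBarrier, if_pos hu]
  norm_cast

theorem affineProxObj_of_not_lt (hγμ : 0 < γ * μ) (hu : ¬ ⟪a, u⟫_ℝ < b) :
    affineProxObj a b γ μ x u = ⊤ := by
  rw [affineProxObj, affineBarrier, if_neg hu, EReal.coe_mul_top_of_pos (by exact_mod_cast hγμ)]
  rfl

end ProxObjective

theorem affine_barrier_prox {n : ℕ} (a : EuclideanSpace ℝ (Fin n)) (ha : a ≠ 0)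
    (b γ μ : ℝ) (hγ : 0 < γ) (hμ : 0 < μ) (x : EuclideanSpace ℝ (Fin n)) :
    ∀ u : EuclideanSpace ℝ (Fin n),
      u ≠ x + (((b - ⟪a, x⟫_ℝ) -
          Real.sqrt ((b - ⟪a, x⟫_ℝ) ^ 2 + 4 * γ * μ * ‖a‖ ^ 2)) / (2 * ‖a‖ ^ 2)) • a →
      affineProxObj a b γ μ x
          (x + (((b - ⟪a, x⟫_ℝ) -
            Real.sqrt ((b - ⟪a, x⟫_ℝ) ^ 2 + 4 * γ * μ * ‖a‖ ^ 2)) / (2 * ‖a‖ ^ 2)) • a)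
        < affineProxObj a b γ μ x u := by
  intro u hu
  have hγμ : 0 < γ * μ := mul_pos hγ hμ
  set t := ((b - ⟪a, x⟫_ℝ) -
    Real.sqrt ((b - ⟪a, x⟫_ℝ) ^ 2 + 4 * γ * μ * ‖a‖ ^ 2)) / (2 * ‖a‖ ^ 2) with ht
  obtain ⟨hgap, hroot⟩ := pos_sub_mul_and_mul_sub_mul_eq_of_neg_root (s := b - ⟪a, x⟫_ℝ) (t := t)
    (pow_pos (norm_pos_iff.mpr ha) 2) hγμ (by rw [ht, mul_assoc 4])
  have hgap_p : b - ⟪a, x + t • a⟫_ℝ = b - ⟪a, x⟫_ℝ - t * ‖a‖ ^ 2 := by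
    rw [inner_add_right, real_inner_smul_right, real_inner_self_eq_norm_sq]; ring
  have hp : ⟪a, x + t • a⟫_ℝ < b := by linarith
  rw [affineProxObj_of_lt hp]
  by_cases hub : ⟪a, u⟫_ℝ < b
  · rw [affineProxObj_of_lt hub, EReal.coe_lt_coe_iff]
    exact half_sq_sub_log_lt_of_stationary hγμ.le hp hub rfl (by rw [hgap_p, hroot]) hu
  · rw [affineProxObj_of_not_lt hγμ hub]
    exact EReal.coe_lt_top _
end

section
/- Let a ∈ ℝⁿ \ {0}, b_m < b_M be reals, γ > 0, μ > 0, and x ∈ ℝⁿ. Then the cubic equation z³ − (b_m + b_M + aᵀx) z² + (b_m b_M + aᵀx (b_m + b_M) − 2γμ‖a‖²) z − b_m b_M aᵀx + γμ (b_m + b_M)‖a‖² = 0 has exactly one solution z in the open interval (b_m, b_M). -/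
/-!
Write `c = γ μ ‖a‖²` and `s = aᵀx`; the cubic is `(z - b_m)(z - b_M)(z - s) + c (b_m + b_M - 2z)`.
It equals `c (b_M - b_m) > 0` at `b_m` and `-c (b_M - b_m) < 0` at `b_M`, so it has a root in between.
On `(b_m, b_M)` it factors as `(z - b_m)(z - b_M) g(z)` with `g(z) = z - s - c/(z - b_m) + c/(b_M - z)`
strictly increasing, so the root is unique.
-/

open Set

open scoped InnerProductSpace

def slabCubic (l u c s z : ℝ) : ℝ :=
  (z - l) * (z - u) * (z - s) + c * (l + u - 2 * z)

namespace slabCubic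

variable {l u c s : ℝ}

theorem eq_mul_of_mem_Ioo {z : ℝ} (hz : z ∈ Ioo l u) :
    slabCubic l u c s z = (z - l) * (z - u) * (z - s - c / (z - l) + c / (u - z)) := by
  have hl : z - l ≠ 0 := (sub_pos.2 hz.1).ne'
  have hu : u - z ≠ 0 := (sub_pos.2 hz.2).ne'
  unfold slabCubic
  field_simp
  ring

theorem strictMonoOn_cofactor (hc : 0 ≤ c) :
    StrictMonoOn (fun z => z - s - c / (z - l) + c / (u - z)) (Ioo l u) := by
  intro w hw z hz hwz
  have hwl : 0 < w - l := sub_pos.2 hw.1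
  have hzu : 0 < u - z := sub_pos.2 hz.2
  have hl : c / (z - l) ≤ c / (w - l) := by gcongr
  have hu : c / (u - w) ≤ c / (u - z) := by gcongr
  dsimp only
  linarith

theorem exists_eq_zero (hlu : l < u) (hc : 0 < c) :
    ∃ z ∈ Ioo l u, slabCubic l u c s z = 0 := by
  have hcont : ContinuousOn (slabCubic l u c s) (Icc l u) := by
    unfold slabCubic
    fun_prop
  have hsign : (0 : ℝ) ∈ Ioo (slabCubic l u c s u) (slabCubic l u c s l) := by
    have hpos : 0 < c * (u - l) := mul_pos hc (sub_pos.2 hlu)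
    constructor <;> · unfold slabCubic; linarith
  exact intermediate_value_Ioo' hlu.le hcont hsign

theorem eq_of_eq_zero (hc : 0 ≤ c) {w z : ℝ} (hw : w ∈ Ioo l u) (hz : z ∈ Ioo l u)
    (hfw : slabCubic l u c s w = 0) (hfz : slabCubic l u c s z = 0) : w = z := by
  have cofactor_eq_zero {y : ℝ} (hy : y ∈ Ioo l u) (hfy : slabCubic l u c s y = 0) :
      y - s - c / (y - l) + c / (u - y) = 0 := by
    rw [eq_mul_of_mem_Ioo hy] at hfy
    have hl : y - l ≠ 0 := (sub_pos.2 hy.1).ne'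
    have hu : y - u ≠ 0 := (sub_neg.2 hy.2).ne
    simpa [hl, hu] using hfy
  exact (strictMonoOn_cofactor hc).injOn hw hz
    ((cofactor_eq_zero hw hfw).trans (cofactor_eq_zero hz hfz).symm)

theorem existsUnique_eq_zero (hlu : l < u) (hc : 0 < c) :
    ∃! z ∈ Ioo l u, slabCubic l u c s z = 0 :=
  let ⟨z, hz, hfz⟩ := exists_eq_zero (s := s) hlu hc
  ⟨z, ⟨hz, hfz⟩, fun _ ⟨hw, hfw⟩ => eq_of_eq_zero hc.le hw hz hfw hfz⟩

end slabCubic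

theorem hyperslab_cubic_unique_root {n : ℕ} (a : EuclideanSpace ℝ (Fin n)) (ha : a ≠ 0)
    (bm bM : ℝ) (hb : bm < bM) (γ μ : ℝ) (hγ : 0 < γ) (hμ : 0 < μ)
    (x : EuclideanSpace ℝ (Fin n)) :
    ∃! z : ℝ, z ∈ Set.Ioo bm bM ∧
      z ^ 3 - (bm + bM + ⟪a, x⟫_ℝ) * z ^ 2 +
        (bm * bM + ⟪a, x⟫_ℝ * (bm + bM) - 2 * γ * μ * ‖a‖ ^ 2) * z -
        bm * bM * ⟪a, x⟫_ℝ + γ * μ * (bm + bM) * ‖a‖ ^ 2 = 0 := by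
  have hc : 0 < γ * μ * ‖a‖ ^ 2 := by have := norm_pos_iff.2 ha; positivity
  refine (existsUnique_congr fun z => ?_).1
    (slabCubic.existsUnique_eq_zero (s := ⟪a, x⟫_ℝ) hb hc)
  unfold slabCubic
  ring_nf
end

section
/- Let a ∈ ℝⁿ \ {0}, b_m < b_M be reals, γ > 0, μ > 0. For x ∈ ℝⁿ, let κ(x, μ, γ) be the unique solution in (b_m, b_M) of z³ − (b_m + b_M + aᵀx) z² + (b_m b_M + aᵀx (b_m + b_M) − 2γμ‖a‖²) z − b_m b_M aᵀx + γμ (b_m + b_M)‖a‖² = 0, let η(x, μ, γ) = (b_M − κ(x, μ, γ))(b_m − κ(x, μ, γ)) − (b_m + b_M − 2κ(x, μ, γ))(κ(x, μ, γ) − aᵀx) − 2γμ‖a‖², and let φ(x, μ, γ) = x + ((κ(x, μ, γ) − aᵀx)/‖a‖²) a. Then the map x′ ↦ φ(x′, μ, γ) is differentiable at every x ∈ ℝⁿ and its Jacobian matrix equals Iₙ + (1/‖a‖²) · ((b_M − κ(x, μ, γ))(b_m − κ(x, μ, γ))/η(x, μ, γ) − 1) · a aᵀ. -/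
/-!
With `c = γ μ ‖a‖²` and `B'(z) = 1/(bM - z) - 1/(z - bm)` the derivative of the scalar log
barrier, the cubic is `(⟪a, x⟫ - z - c B'(z)) (bM - z) (z - bm) = 0`, so `κ x` is the unique
`z ∈ (bm, bM)` with `z + c B'(z) = ⟪a, x⟫`. The left side has derivative `1 + c B''(z) > 0`, so
the inverse function theorem makes `κ` differentiable with gradient `a / (1 + c B''(κ x))`.
Finally `η = (1 + c B''(κ)) (bM - κ) (bm - κ)`, so the ratio in the Jacobian is
`1 / (1 + c B''(κ))`.
-/

open scoped InnerProductSpace Topology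
open Set

theorem hasFDerivAt_of_apply_eq_of_injOn {E : Type*} [NormedAddCommGroup E] [NormedSpace ℝ E]
    {f : ℝ → ℝ} {f' : ℝ} {U : Set ℝ} {k h : E → ℝ} {h' : E →L[ℝ] ℝ} {x : E}
    (hU : IsOpen U) (hfU : InjOn f U) (hkU : ∀ᶠ y in 𝓝 x, k y ∈ U)
    (hfk : ∀ᶠ y in 𝓝 x, f (k y) = h y) (hf : HasStrictDerivAt f f' (k x)) (hf' : f' ≠ 0)
    (hh : HasFDerivAt h h' x) : HasFDerivAt k (f'⁻¹ • h') x := by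
  have hequiv := hf.hasStrictFDerivAt_equiv hf'
  set g := hf.localInverse f f' (k x) hf'
  have hfkx : f (k x) = h x := hfk.self_of_nhds
  have hg : HasStrictDerivAt g f'⁻¹ (h x) := hfkx ▸ hf.to_localInverse hf'
  have hgU : ∀ᶠ t in 𝓝 (h x), g t ∈ U := by
    refine hfkx ▸ hequiv.localInverse_continuousAt.eventually_mem ?_
    rw [hequiv.localInverse_apply_image]
    exact hU.mem_nhds hkU.self_of_nhds
  have hfg : ∀ᶠ t in 𝓝 (h x), f (g t) = t := hfkx ▸ hequiv.eventually_right_inverse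
  have hkg : (fun y => g (h y)) =ᶠ[𝓝 x] k := by
    filter_upwards [hh.continuousAt.eventually hgU, hh.continuousAt.eventually hfg, hkU, hfk]
      with y hgyU hfgy hkyU hfky
    exact hfU hgyU hkyU (hfgy.trans hfky.symm)
  exact (hg.hasDerivAt.comp_hasFDerivAt x hh).congr_of_eventuallyEq hkg.symm

/-- Derivative of the scalar log barrier `z ↦ -log (bM - z) - log (z - bm)`. -/
noncomputable def logBarrierDeriv (bm bM z : ℝ) : ℝ := (bM - z)⁻¹ - (z - bm)⁻¹

noncomputable def logBarrierSecondDeriv (bm bM z : ℝ) : ℝ := ((bM - z) ^ 2)⁻¹ + ((z - bm) ^ 2)⁻¹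

section LogBarrier

variable {bm bM z : ℝ}

theorem hasStrictDerivAt_logBarrierDeriv (hM : z ≠ bM) (hm : z ≠ bm) :
    HasStrictDerivAt (logBarrierDeriv bm bM) (logBarrierSecondDeriv bm bM z) z := by
  have hM' := (hasStrictDerivAt_inv (sub_ne_zero.mpr hM.symm)).comp z
    ((hasStrictDerivAt_id z).const_sub bM)
  have hm' := (hasStrictDerivAt_inv (sub_ne_zero.mpr hm)).comp z
    ((hasStrictDerivAt_id z).sub_const bm)
  exact (hM'.sub hm').congr_deriv (by simp only [logBarrierSecondDeriv]; ring)

theorem hasStrictDerivAt_add_mul_logBarrierDeriv (c : ℝ) (hM : z ≠ bM) (hm : z ≠ bm) :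
    HasStrictDerivAt (fun z => z + c * logBarrierDeriv bm bM z)
      (1 + c * logBarrierSecondDeriv bm bM z) z :=
  (hasStrictDerivAt_id z).add ((hasStrictDerivAt_logBarrierDeriv hM hm).const_mul c)

theorem one_add_mul_logBarrierSecondDeriv_pos {c : ℝ} (hc : 0 ≤ c) (hz : z ∈ Ioo bm bM) :
    0 < 1 + c * logBarrierSecondDeriv bm bM z := by
  have := sub_pos.mpr hz.2
  unfold logBarrierSecondDeriv
  positivity

theorem strictMonoOn_add_mul_logBarrierDeriv {c : ℝ} (hc : 0 ≤ c) :
    StrictMonoOn (fun z => z + c * logBarrierDeriv bm bM z) (Ioo bm bM) := by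
  have hderiv (z) (hz : z ∈ Ioo bm bM) :=
    hasStrictDerivAt_add_mul_logBarrierDeriv c hz.2.ne hz.1.ne'
  refine strictMonoOn_of_hasDerivWithinAt_pos
    (f' := fun z => 1 + c * logBarrierSecondDeriv bm bM z) (convex_Ioo bm bM)
    (fun z hz => (hderiv z hz).hasDerivAt.continuousAt.continuousWithinAt) ?_ ?_ <;>
    simp only [interior_Ioo]
  · exact fun z hz => (hderiv z hz).hasDerivAt.hasDerivWithinAt
  · exact fun z hz => one_add_mul_logBarrierSecondDeriv_pos hc hz

theorem add_mul_logBarrierDeriv_eq_of_cubic {c t : ℝ} (hz : z ∈ Ioo bm bM)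
    (h : z ^ 3 - (bm + bM + t) * z ^ 2 + (bm * bM + t * (bm + bM) - 2 * c) * z - bm * bM * t
      + c * (bm + bM) = 0) :
    z + c * logBarrierDeriv bm bM z = t := by
  have hM : bM - z ≠ 0 := sub_ne_zero.mpr hz.2.ne'
  have hm : z - bm ≠ 0 := sub_ne_zero.mpr hz.1.ne'
  have : (t - (z + c * logBarrierDeriv bm bM z)) * ((bM - z) * (z - bm)) = 0 := by
    unfold logBarrierDeriv
    field_simp
    linear_combination h
  linarith [(mul_eq_zero.mp this).resolve_right (mul_ne_zero hM hm)]

theorem div_eta_eq_inv_one_add_mul_logBarrierSecondDeriv {c t : ℝ} (hz : z ∈ Ioo bm bM)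
    (h : z + c * logBarrierDeriv bm bM z = t) :
    (bM - z) * (bm - z) / ((bM - z) * (bm - z) - (bm + bM - 2 * z) * (z - t) - 2 * c) =
      (1 + c * logBarrierSecondDeriv bm bM z)⁻¹ := by
  have hM : bM - z ≠ 0 := sub_ne_zero.mpr hz.2.ne'
  have hm : z - bm ≠ 0 := sub_ne_zero.mpr hz.1.ne'
  have hm' : bm - z ≠ 0 := sub_ne_zero.mpr hz.1.ne
  have hη : (bM - z) * (bm - z) - (bm + bM - 2 * z) * (z - t) - 2 * c =
      (1 + c * logBarrierSecondDeriv bm bM z) * ((bM - z) * (bm - z)) := by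
    subst h
    unfold logBarrierDeriv logBarrierSecondDeriv
    field_simp
    ring
  rw [hη, div_mul_cancel_right₀ (mul_ne_zero hM hm')]

end LogBarrier

theorem hasFDerivAt_add_div_sq_norm_smul {E : Type*} [NormedAddCommGroup E]
    [InnerProductSpace ℝ E] {k : E → ℝ} {a x : E} {s : ℝ} (hk : HasFDerivAt k (s • innerSL ℝ a) x) :
    HasFDerivAt (fun x' => x' + ((k x' - ⟪a, x'⟫_ℝ) / ‖a‖ ^ 2) • a)
      (ContinuousLinearMap.id ℝ E + (1 / ‖a‖ ^ 2 * (s - 1)) • (innerSL ℝ a).smulRight a) x := by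
  convert (hasFDerivAt_id x).add
    (((hk.sub (innerSL ℝ a).hasFDerivAt).mul_const (‖a‖ ^ 2)⁻¹).smul_const a) using 1
  · simp only [div_eq_mul_inv]
    rfl
  · ext v
    simp only [one_div, add_apply, ContinuousLinearMap.id_apply, smul_apply,
      ContinuousLinearMap.smulRight_apply, coe_innerSL_apply, sub_apply, smul_eq_mul,
      add_right_inj, smul_smul]
    congr 1
    ring

theorem hyperslab_prox_jacobian_general {n : ℕ} (a : EuclideanSpace ℝ (Fin n))
    (bm bM : ℝ) (γ μ : ℝ) (hγ : 0 < γ) (hμ : 0 < μ)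
    (κ : EuclideanSpace ℝ (Fin n) → ℝ)
    (hκ : ∀ x : EuclideanSpace ℝ (Fin n), κ x ∈ Set.Ioo bm bM ∧
      (κ x) ^ 3 - (bm + bM + ⟪a, x⟫_ℝ) * (κ x) ^ 2 +
        (bm * bM + ⟪a, x⟫_ℝ * (bm + bM) - 2 * γ * μ * ‖a‖ ^ 2) * (κ x) -
        bm * bM * ⟪a, x⟫_ℝ + γ * μ * (bm + bM) * ‖a‖ ^ 2 = 0) :
    ∀ x : EuclideanSpace ℝ (Fin n),
      HasFDerivAt (fun x' => x' + ((κ x' - ⟪a, x'⟫_ℝ) / ‖a‖ ^ 2) • a)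
        (ContinuousLinearMap.id ℝ (EuclideanSpace ℝ (Fin n)) +
          (1 / ‖a‖ ^ 2 *
              ((bM - κ x) * (bm - κ x) /
                  ((bM - κ x) * (bm - κ x) -
                    (bm + bM - 2 * κ x) * (κ x - ⟪a, x⟫_ℝ) - 2 * γ * μ * ‖a‖ ^ 2) - 1)) •
            (innerSL ℝ a).smulRight a) x := by
  intro x
  have hc : 0 ≤ γ * μ * ‖a‖ ^ 2 := by positivity
  have hroot (y) : κ y + γ * μ * ‖a‖ ^ 2 * logBarrierDeriv bm bM (κ y) = ⟪a, y⟫_ℝ :=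
    add_mul_logBarrierDeriv_eq_of_cubic (hκ y).1 (by linear_combination (hκ y).2)
  have hκx := (hκ x).1
  have hderiv := hasFDerivAt_of_apply_eq_of_injOn isOpen_Ioo
    (strictMonoOn_add_mul_logBarrierDeriv hc).injOn (.of_forall fun y => (hκ y).1)
    (.of_forall hroot) (hasStrictDerivAt_add_mul_logBarrierDeriv _ hκx.2.ne hκx.1.ne')
    (one_add_mul_logBarrierSecondDeriv_pos hc hκx).ne' (innerSL ℝ a).hasFDerivAt
  rw [show 2 * γ * μ * ‖a‖ ^ 2 = 2 * (γ * μ * ‖a‖ ^ 2) by ring,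
    div_eta_eq_inv_one_add_mul_logBarrierSecondDeriv hκx (hroot x)]
  exact hasFDerivAt_add_div_sq_norm_smul hderiv

theorem hyperslab_prox_jacobian {n : ℕ} (a : EuclideanSpace ℝ (Fin n)) (ha : a ≠ 0)
    (bm bM : ℝ) (hb : bm < bM) (γ μ : ℝ) (hγ : 0 < γ) (hμ : 0 < μ)
    (κ : EuclideanSpace ℝ (Fin n) → ℝ)
    (hκ : ∀ x : EuclideanSpace ℝ (Fin n), κ x ∈ Set.Ioo bm bM ∧
      (κ x) ^ 3 - (bm + bM + ⟪a, x⟫_ℝ) * (κ x) ^ 2 +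
        (bm * bM + ⟪a, x⟫_ℝ * (bm + bM) - 2 * γ * μ * ‖a‖ ^ 2) * (κ x) -
        bm * bM * ⟪a, x⟫_ℝ + γ * μ * (bm + bM) * ‖a‖ ^ 2 = 0) :
    ∀ x : EuclideanSpace ℝ (Fin n),
      HasFDerivAt (fun x' => x' + ((κ x' - ⟪a, x'⟫_ℝ) / ‖a‖ ^ 2) • a)
        (ContinuousLinearMap.id ℝ (EuclideanSpace ℝ (Fin n)) +
          (1 / ‖a‖ ^ 2 *
              ((bM - κ x) * (bm - κ x) /
                  ((bM - κ x) * (bm - κ x) -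
                    (bm + bM - 2 * κ x) * (κ x - ⟪a, x⟫_ℝ) - 2 * γ * μ * ‖a‖ ^ 2) - 1)) •
            (innerSL ℝ a).smulRight a) x :=
  hyperslab_prox_jacobian_general a bm bM γ μ hγ hμ κ hκ
end

section
/- Let a ∈ ℝⁿ \ {0}, b_m < b_M be reals, x ∈ ℝⁿ. For γ > 0 and μ > 0, let κ(x, μ, γ) be the unique solution in (b_m, b_M) of z³ − (b_m + b_M + aᵀx) z² + (b_m b_M + aᵀx (b_m + b_M) − 2γμ‖a‖²) z − b_m b_M aᵀx + γμ (b_m + b_M)‖a‖² = 0, let η(x, μ, γ) = (b_M − κ(x, μ, γ))(b_m − κ(x, μ, γ)) − (b_m + b_M − 2κ(x, μ, γ))(κ(x, μ, γ) − aᵀx) − 2γμ‖a‖², and let φ(x, μ, γ) = x + ((κ(x, μ, γ) − aᵀx)/‖a‖²) a. Then φ(x, ·, ·) is differentiable on (0, +∞)², with ∂φ/∂μ (x, μ, γ) = (−γ (b_m + b_M − 2κ(x, μ, γ)) / η(x, μ, γ)) a and ∂φ/∂γ (x, μ, γ) = (−μ (b_m + b_M − 2κ(x, μ, γ)) / η(x,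 μ, γ)) a. -/
/-!
For t > 0 put F(t, z) = (z - b_m)(z - b_M)(z - aᵀx) + t (b_m + b_M - 2z); the cubic defining
κ(x, μ, γ) is F(γμ‖a‖², ·). At a root z ∈ (b_m, b_M) one has ∂F/∂z = η, and
t η = -t (b_M - z)(z - b_m) - (b_M - z)(z - b_m)(z - aᵀx)² - 2t² < 0. Hence the root in
(b_m, b_M) is unique, so κ depends on (μ, γ) only through t = γμ‖a‖², and by the implicit
function theorem it is differentiable in t with derivative -(b_m + b_M - 2κ)/η. The chain rule
through t = γμ‖a‖² and the affine map κ ↦ φ give the partial derivatives.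
-/

open scoped InnerProductSpace
open Filter Topology Set ContinuousLinearMap

namespace Hyperslab

def cubic (bm bM c t z : ℝ) : ℝ := (z - bm) * (z - bM) * (z - c) + t * (bm + bM - 2 * z)

def eta (bm bM c t z : ℝ) : ℝ := (bM - z) * (bm - z) - (bm + bM - 2 * z) * (z - c) - 2 * t

theorem hasStrictFDerivAt_cubic (bm bM c t z : ℝ) :
    HasStrictFDerivAt (fun p : ℝ × ℝ => cubic bm bM c p.1 p.2)
      ((bm + bM - 2 * z) • fst ℝ ℝ ℝ + eta bm bM c t z • snd ℝ ℝ ℝ) (t, z) := by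
  have h1 := hasStrictFDerivAt_fst (𝕜 := ℝ) (p := (t, z))
  have h2 := hasStrictFDerivAt_snd (𝕜 := ℝ) (p := (t, z))
  refine ((((h2.sub_const bm).mul (h2.sub_const bM)).mul (h2.sub_const c)).add
    (h1.mul ((h2.const_mul 2).const_sub (bm + bM)))).congr_fderiv (ext fun p => ?_)
  simp only [eta, add_apply, smul_apply, neg_apply, coe_fst', coe_snd', smul_eq_mul, Pi.mul_apply]
  ring

variable {bm bM c : ℝ}

theorem eta_neg {t z : ℝ} (ht : 0 < t) (hz : z ∈ Ioo bm bM) (hroot : cubic bm bM c t z = 0) :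
    eta bm bM c t z < 0 := by
  have key : t * eta bm bM c t z =
      -(t * ((bM - z) * (z - bm))) - (bM - z) * (z - bm) * (z - c) ^ 2 - 2 * t ^ 2 := by
    unfold cubic at hroot
    unfold eta
    linear_combination (c - z) * hroot
  have h₁ : 0 < (bM - z) * (z - bm) := mul_pos (sub_pos.2 hz.2) (sub_pos.2 hz.1)
  have h₂ : 0 ≤ (bM - z) * (z - bm) * (z - c) ^ 2 := mul_nonneg h₁.le (sq_nonneg _)
  refine neg_of_mul_neg_right ?_ ht.le
  linarith [mul_pos ht h₁, pow_pos ht 2]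

theorem eq_of_cubic_eq_zero {t z₁ z₂ : ℝ} (ht : 0 < t) (hz₁ : z₁ ∈ Ioo bm bM)
    (hz₂ : z₂ ∈ Ioo bm bM) (h₁ : cubic bm bM c t z₁ = 0) (h₂ : cubic bm bM c t z₂ = 0) :
    z₁ = z₂ := by
  have key : (z₁ - z₂) * (eta bm bM c t z₁ + eta bm bM c t z₂ - (z₁ - z₂) ^ 2) = 0 := by
    unfold cubic at h₁ h₂
    unfold eta
    linear_combination 2 * h₁ - 2 * h₂
  have hneg : eta bm bM c t z₁ + eta bm bM c t z₂ - (z₁ - z₂) ^ 2 < 0 := by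
    nlinarith [eta_neg ht hz₁ h₁, eta_neg ht hz₂ h₂]
  exact sub_eq_zero.1 ((mul_eq_zero.1 key).resolve_right hneg.ne)

theorem hasDerivAt_root {K : ℝ → ℝ}
    (hK : ∀ t, 0 < t → K t ∈ Ioo bm bM ∧ cubic bm bM c t (K t) = 0) {t : ℝ} (ht : 0 < t) :
    HasDerivAt K (-(bm + bM - 2 * K t) / eta bm bM c t (K t)) t := by
  obtain ⟨hKt, hroot⟩ := hK t ht
  have hη := (eta_neg ht hKt hroot).ne
  have hF := hasStrictFDerivAt_cubic bm bM c t (K t)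
  have hinv : (((bm + bM - 2 * K t) • fst ℝ ℝ ℝ + eta bm bM c t (K t) • snd ℝ ℝ ℝ) ∘L
      inr ℝ ℝ ℝ).IsInvertible := by
    refine ⟨ContinuousLinearEquiv.unitsEquivAut ℝ (Units.mk0 _ hη), ?_⟩
    ext; simp
  set ψ := hF.implicitFunctionOfProdDomain hinv
  have hψ_root : ∀ᶠ s in 𝓝 t, cubic bm bM c s (ψ s) = 0 := by
    simpa [hroot] using hF.eventually_apply_implicitFunctionOfProdDomain hinv
  have hψ_mem : ∀ᶠ s in 𝓝 t, ψ s ∈ Ioo bm bM :=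
    hF.tendsto_implicitFunctionOfProdDomain hinv (isOpen_Ioo.mem_nhds hKt)
  have hKψ : K =ᶠ[𝓝 t] ψ := by
    filter_upwards [hψ_root, hψ_mem, Ioi_mem_nhds ht] with s hs₁ hs₂ hs
    exact eq_of_cubic_eq_zero hs (hK s hs).1 hs₂ (hK s hs).2 hs₁
  have hKd : HasDerivAt K (deriv K t) t :=
    ((hF.hasStrictFDerivAt_implicitFunctionOfProdDomain hinv).differentiableAt.congr_of_eventuallyEq
      hKψ).hasDerivAt
  have hchain : HasDerivAt (fun s => cubic bm bM c s (K s))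
      ((bm + bM - 2 * K t) + eta bm bM c t (K t) * deriv K t) t := by
    refine (hF.hasFDerivAt.comp_hasDerivAt t ((hasDerivAt_id t).prodMk hKd)).congr_deriv ?_
    simp
  have hconst : HasDerivAt (fun s => cubic bm bM c s (K s)) 0 t :=
    (hasDerivAt_const t 0).congr_of_eventuallyEq
      (eventually_of_mem (Ioi_mem_nhds ht) fun s hs => (hK s hs).2)
  convert hKd using 1
  rw [div_eq_iff hη]
  linear_combination -hchain.unique hconst

variable {A : ℝ} {κ : ℝ → ℝ → ℝ}

theorem exists_eq_root_comp_mul (hA : 0 < A)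
    (hκ : ∀ μ γ, 0 < μ → 0 < γ → κ μ γ ∈ Ioo bm bM ∧ cubic bm bM c (γ * μ * A) (κ μ γ) = 0) :
    ∃ K : ℝ → ℝ, (∀ t, 0 < t → K t ∈ Ioo bm bM ∧ cubic bm bM c t (K t) = 0) ∧
      ∀ μ γ, 0 < μ → 0 < γ → κ μ γ = K (γ * μ * A) := by
  refine ⟨fun t => κ (t / A) 1, fun t ht => ?_, fun μ γ hμ hγ => ?_⟩
  · simpa [div_mul_cancel₀ t hA.ne'] using hκ (t / A) 1 (by positivity) one_pos
  · have ht : 0 < γ * μ * A := by positivity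
    have hK := hκ (γ * μ * A / A) 1 (by positivity) one_pos
    rw [one_mul, div_mul_cancel₀ _ hA.ne'] at hK
    exact eq_of_cubic_eq_zero ht (hκ μ γ hμ hγ).1 hK.1 (hκ μ γ hμ hγ).2 hK.2

theorem hasFDerivAt_root_mul (hA : 0 < A)
    (hκ : ∀ μ γ, 0 < μ → 0 < γ → κ μ γ ∈ Ioo bm bM ∧ cubic bm bM c (γ * μ * A) (κ μ γ) = 0)
    {μ γ : ℝ} (hμ : 0 < μ) (hγ : 0 < γ) :
    HasFDerivAt (fun p : ℝ × ℝ => κ p.1 p.2)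
      ((-(bm + bM - 2 * κ μ γ) / eta bm bM c (γ * μ * A) (κ μ γ)) •
        A • (γ • fst ℝ ℝ ℝ + μ • snd ℝ ℝ ℝ)) (μ, γ) := by
  obtain ⟨K, hK, hκK⟩ := exists_eq_root_comp_mul hA hκ
  have hKd := hasDerivAt_root hK (t := γ * μ * A) (by positivity)
  rw [← hκK μ γ hμ hγ] at hKd
  have hprod : HasFDerivAt (fun p : ℝ × ℝ => p.2 * p.1 * A)
      (A • (γ • fst ℝ ℝ ℝ + μ • snd ℝ ℝ ℝ)) (μ, γ) := by
    refine ((hasFDerivAt_snd.mul hasFDerivAt_fst).mul_const A).congr_fderiv ?_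
    ext <;> simp
  refine (hKd.comp_hasFDerivAt (μ, γ) hprod).congr_of_eventuallyEq ?_
  filter_upwards [prod_mem_nhds (Ioi_mem_nhds hμ) (Ioi_mem_nhds hγ)] with p hp
    using hκK p.1 p.2 hp.1 hp.2

end Hyperslab

open Hyperslab in
theorem hyperslab_prox_deriv_mu_gamma_general {n : ℕ} (a : EuclideanSpace ℝ (Fin n)) (ha : a ≠ 0)
    (bm bM : ℝ) (x : EuclideanSpace ℝ (Fin n))
    (κ : ℝ → ℝ → ℝ)
    (hκ : ∀ μ γ : ℝ, 0 < μ → 0 < γ → κ μ γ ∈ Set.Ioo bm bM ∧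
      (κ μ γ) ^ 3 - (bm + bM + ⟪a, x⟫_ℝ) * (κ μ γ) ^ 2 +
        (bm * bM + ⟪a, x⟫_ℝ * (bm + bM) - 2 * γ * μ * ‖a‖ ^ 2) * (κ μ γ) -
        bm * bM * ⟪a, x⟫_ℝ + γ * μ * (bm + bM) * ‖a‖ ^ 2 = 0) :
    ∀ μ γ : ℝ, 0 < μ → 0 < γ →
      DifferentiableAt ℝ
        (fun p : ℝ × ℝ => x + ((κ p.1 p.2 - ⟪a, x⟫_ℝ) / ‖a‖ ^ 2) • a) (μ, γ) ∧
      HasDerivAt (fun t : ℝ => x + ((κ t γ - ⟪a, x⟫_ℝ) / ‖a‖ ^ 2) • a)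
        ((-γ * (bm + bM - 2 * κ μ γ) /
            ((bM - κ μ γ) * (bm - κ μ γ) -
              (bm + bM - 2 * κ μ γ) * (κ μ γ - ⟪a, x⟫_ℝ) - 2 * γ * μ * ‖a‖ ^ 2)) • a) μ ∧
      HasDerivAt (fun t : ℝ => x + ((κ μ t - ⟪a, x⟫_ℝ) / ‖a‖ ^ 2) • a)
        ((-μ * (bm + bM - 2 * κ μ γ) /
            ((bM - κ μ γ) * (bm - κ μ γ) -
              (bm + bM - 2 * κ μ γ) * (κ μ γ - ⟪a, x⟫_ℝ) - 2 * γ * μ * ‖a‖ ^ 2)) • a) γ := by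
  intro μ γ hμ hγ
  have hA : 0 < ‖a‖ ^ 2 := by have := norm_pos_iff.2 ha; positivity
  have hF := hasFDerivAt_root_mul (c := ⟪a, x⟫_ℝ) hA (fun μ γ hμ hγ =>
    ⟨(hκ μ γ hμ hγ).1, by unfold cubic; linear_combination (hκ μ γ hμ hγ).2⟩) hμ hγ
  have hμd := hF.comp_hasDerivAt μ ((hasDerivAt_id μ).prodMk (hasDerivAt_const μ γ))
  have hγd := hF.comp_hasDerivAt γ ((hasDerivAt_const γ μ).prodMk (hasDerivAt_id γ))
  have hκ_diff := hF.differentiableAt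
  refine ⟨by fun_prop,
    (((hμd.sub_const _).div_const _).smul_const a).const_add x |>.congr_deriv ?_,
    (((hγd.sub_const _).div_const _).smul_const a).const_add x |>.congr_deriv ?_⟩ <;>
  · simp only [eta, smul_apply, add_apply, coe_fst', coe_snd', smul_eq_mul]
    congr 1
    field_simp
    ring

theorem hyperslab_prox_deriv_mu_gamma {n : ℕ} (a : EuclideanSpace ℝ (Fin n)) (ha : a ≠ 0)
    (bm bM : ℝ) (hb : bm < bM) (x : EuclideanSpace ℝ (Fin n))
    (κ : ℝ → ℝ → ℝ)
    (hκ : ∀ μ γ : ℝ, 0 < μ → 0 < γ → κ μ γ ∈ Set.Ioo bm bM ∧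
      (κ μ γ) ^ 3 - (bm + bM + ⟪a, x⟫_ℝ) * (κ μ γ) ^ 2 +
        (bm * bM + ⟪a, x⟫_ℝ * (bm + bM) - 2 * γ * μ * ‖a‖ ^ 2) * (κ μ γ) -
        bm * bM * ⟪a, x⟫_ℝ + γ * μ * (bm + bM) * ‖a‖ ^ 2 = 0) :
    ∀ μ γ : ℝ, 0 < μ → 0 < γ →
      DifferentiableAt ℝ
        (fun p : ℝ × ℝ => x + ((κ p.1 p.2 - ⟪a, x⟫_ℝ) / ‖a‖ ^ 2) • a) (μ, γ) ∧
      HasDerivAt (fun t : ℝ => x + ((κ t γ - ⟪a, x⟫_ℝ) / ‖a‖ ^ 2) • a)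
        ((-γ * (bm + bM - 2 * κ μ γ) /
            ((bM - κ μ γ) * (bm - κ μ γ) -
              (bm + bM - 2 * κ μ γ) * (κ μ γ - ⟪a, x⟫_ℝ) - 2 * γ * μ * ‖a‖ ^ 2)) • a) μ ∧
      HasDerivAt (fun t : ℝ => x + ((κ μ t - ⟪a, x⟫_ℝ) / ‖a‖ ^ 2) • a)
        ((-μ * (bm + bM - 2 * κ μ γ) /
            ((bM - κ μ γ) * (bm - κ μ γ) -
              (bm + bM - 2 * κ μ γ) * (κ μ γ - ⟪a, x⟫_ℝ) - 2 * γ * μ * ‖a‖ ^ 2)) • a) γ :=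
  hyperslab_prox_deriv_mu_gamma_general a ha bm bM x κ hκ
end

section
/- Let α > 0, γ > 0, μ > 0, and r ≥ 0. Then the cubic equation z³ − r z² − (α + 2γμ) z + α r = 0 has exactly one solution z in the half-open interval [0, √α). -/
/-!
Write the cubic as `p z = (z - r) (z ^ 2 - α) - c z` with `c = 2 γ μ > 0`. A root in `[0, √α)`
must satisfy `z ≤ r`, so all such roots lie in `[0, m]` with `m = min r √α`. On that interval `p` is
strictly decreasing, `p 0 = α r ≥ 0` and `p m = -c m ≤ 0`, which gives exactly one root there;
it is not `√α` because `p √α = -c √α < 0`.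
-/

open Set

def ballCubic (α c r z : ℝ) : ℝ := z ^ 3 - r * z ^ 2 - (α + c) * z + α * r

namespace ballCubic

variable {α c r : ℝ}

theorem eq_factor (z : ℝ) : ballCubic α c r z = (z - r) * (z ^ 2 - α) - c * z := by
  unfold ballCubic; ring

theorem eq_neg_mul_of_sq_eq {z : ℝ} (hz : z ^ 2 = α) : ballCubic α c r z = -c * z := by
  rw [eq_factor, hz]; ring

theorem self_eq : ballCubic α c r r = -c * r := by
  rw [eq_factor]; ring

theorem continuous : Continuous (ballCubic α c r) := by
  unfold ballCubic; fun_prop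

theorem le_of_eq_zero (hc : 0 ≤ c) {z : ℝ} (hz₀ : 0 ≤ z) (hzα : z < √α)
    (hroot : ballCubic α c r z = 0) : z ≤ r := by
  have hsq : z ^ 2 < α := (Real.lt_sqrt hz₀).mp hzα
  have hprod : 0 ≤ (z - r) * (z ^ 2 - α) := by
    rw [eq_factor] at hroot; nlinarith [mul_nonneg hc hz₀]
  nlinarith [nonpos_of_mul_nonneg_left hprod (sub_neg.mpr hsq)]

theorem strictAntiOn (hc : 0 < c) : StrictAntiOn (ballCubic α c r) (Icc 0 (min r √α)) := by
  rintro x ⟨hx₀, hx⟩ y ⟨hy₀, hy⟩ hxy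
  rw [le_min_iff] at hx hy
  have hxy_le : x * y ≤ α :=
    calc x * y ≤ y ^ 2 := by nlinarith
      _ ≤ α := (Real.le_sqrt' (hx₀.trans_lt hxy)).mp hy.2
  have hfactor : ballCubic α c r x - ballCubic α c r y =
      (x - y) * (x ^ 2 + x * y + y ^ 2 - r * (x + y) - α - c) := by
    unfold ballCubic; ring
  have hneg : x ^ 2 + x * y + y ^ 2 - r * (x + y) - α - c < 0 := by
    nlinarith [mul_nonneg hx₀ (sub_nonneg.mpr hx.1), mul_nonneg hy₀ (sub_nonneg.mpr hy.1)]
  nlinarith [mul_pos_of_neg_of_neg (sub_neg.mpr hxy) hneg]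

theorem exists_eq_zero (hα : 0 ≤ α) (hc : 0 ≤ c) (hr : 0 ≤ r) :
    ∃ z ∈ Icc 0 (min r √α), ballCubic α c r z = 0 := by
  have hm : 0 ≤ min r √α := le_min hr (Real.sqrt_nonneg α)
  have hzero : ballCubic α c r 0 = α * r := by unfold ballCubic; ring
  have hend : ballCubic α c r (min r √α) = -c * min r √α := by
    rcases min_choice r √α with h | h <;> rw [h]
    · exact self_eq
    · exact eq_neg_mul_of_sq_eq (Real.sq_sqrt hα)
  refine intermediate_value_Icc' hm continuous.continuousOn ⟨?_, ?_⟩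
  · rw [hend]; nlinarith
  · rw [hzero]; positivity

theorem existsUnique_eq_zero (hα : 0 < α) (hc : 0 < c) (hr : 0 ≤ r) :
    ∃! z, z ∈ Ico 0 √α ∧ ballCubic α c r z = 0 := by
  have hroots : ∀ z, z ∈ Ico 0 √α → ballCubic α c r z = 0 → z ∈ Icc 0 (min r √α) :=
    fun z hz hroot => ⟨hz.1, le_min (le_of_eq_zero hc.le hz.1 hz.2 hroot) hz.2.le⟩
  obtain ⟨z, hz, hroot⟩ := exists_eq_zero hα.le hc.le hr
  have hz_ne : z ≠ √α := by
    rintro rfl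
    rw [eq_neg_mul_of_sq_eq (Real.sq_sqrt hα.le)] at hroot
    nlinarith [Real.sqrt_pos.mpr hα]
  refine ⟨z, ⟨⟨hz.1, lt_of_le_of_ne (hz.2.trans (min_le_right _ _)) hz_ne⟩, hroot⟩, ?_⟩
  rintro y ⟨hy, hyroot⟩
  exact (strictAntiOn hc).injOn (hroots y hy hyroot) hz (hyroot.trans hroot.symm)

end ballCubic

theorem ball_cubic_unique_root (α γ μ r : ℝ) (hα : 0 < α) (hγ : 0 < γ) (hμ : 0 < μ)
    (hr : 0 ≤ r) :
    ∃! z : ℝ, z ∈ Set.Ico 0 (Real.sqrt α) ∧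
      z ^ 3 - r * z ^ 2 - (α + 2 * γ * μ) * z + α * r = 0 :=
  ballCubic.existsUnique_eq_zero hα (by positivity) hr
end

section
/- Let α > 0, γ > 0, μ > 0, x ∈ ℝⁿ, and let v ∈ ℝⁿ be the unique minimizer over u with ‖u‖² < α of (1/2)‖x − u‖² − γμ ln(α − ‖u‖²). Then v satisfies the fixed-point equation v = ((α − ‖v‖²)/(α − ‖v‖² + 2γμ)) x, the inner product vᵀ(x − v) is nonnegative, and α − ‖v‖² + 2γμ + 2 vᵀ(x − v) > 0. -/
/-! The objective is differentiable on the open ball and `v` minimizes it there, so its gradient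
`v - x + (2γμ / (α - ‖v‖²)) • v` vanishes. Hence `x = (1 + t) • v` with `t = 2γμ / (α - ‖v‖²) ≥ 0`,
which is the fixed-point equation, and `⟪v, x - v⟫ = t ‖v‖² ≥ 0`. -/

open scoped InnerProductSpace

section LogBarrierProx

variable {E : Type*} [NormedAddCommGroup E] [InnerProductSpace ℝ E] {α c : ℝ} {x v : E}

theorem hasFDerivAt_half_dist_sq_sub_log_barrier (hv : ‖v‖ ^ 2 < α) :
    HasFDerivAt (fun u => 1 / 2 * ‖x - u‖ ^ 2 - c * Real.log (α - ‖u‖ ^ 2))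
      (innerSL ℝ (v - x + (2 * c / (α - ‖v‖ ^ 2)) • v)) v := by
  have hdist := ((hasFDerivAt_id v).const_sub x).norm_sq.const_mul (1 / 2 : ℝ)
  have hbarrier := ((hasFDerivAt_id v).norm_sq.const_sub α).log (sub_pos.mpr hv).ne'
  refine (hdist.sub (hbarrier.const_mul c)).congr_fderiv ?_
  ext w
  simp only [sub_apply, smul_apply, neg_apply, ContinuousLinearMap.comp_apply,
    ContinuousLinearMap.id_apply, coe_innerSL_apply, id_eq, inner_add_left, inner_sub_left,
    real_inner_smul_left, inner_neg_right, nsmul_eq_mul, smul_eq_mul]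
  ring

theorem IsLocalMin.sub_eq_smul_of_log_barrier (hv : ‖v‖ ^ 2 < α)
    (hmin : IsLocalMin (fun u => 1 / 2 * ‖x - u‖ ^ 2 - c * Real.log (α - ‖u‖ ^ 2)) v) :
    x - v = (2 * c / (α - ‖v‖ ^ 2)) • v := by
  set g := v - x + (2 * c / (α - ‖v‖ ^ 2)) • v
  have hgrad : innerSL ℝ g = 0 :=
    hmin.hasFDerivAt_eq_zero (hasFDerivAt_half_dist_sq_sub_log_barrier hv)
  have hg : g = 0 := by simpa using congr($hgrad g)
  linear_combination (norm := module) -hg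

end LogBarrierProx

theorem ball_prox_fixed_point_general {n : ℕ} (α : ℝ) (γ μ : ℝ) (hγ : 0 < γ)
    (hμ : 0 < μ) (x v : EuclideanSpace ℝ (Fin n)) (hv : ‖v‖ ^ 2 < α)
    (hmin : ∀ u : EuclideanSpace ℝ (Fin n), ‖u‖ ^ 2 < α → u ≠ v →
      1 / 2 * ‖x - v‖ ^ 2 - γ * μ * Real.log (α - ‖v‖ ^ 2) <
        1 / 2 * ‖x - u‖ ^ 2 - γ * μ * Real.log (α - ‖u‖ ^ 2)) :
    v = ((α - ‖v‖ ^ 2) / (α - ‖v‖ ^ 2 + 2 * γ * μ)) • x ∧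
    0 ≤ ⟪v, x - v⟫_ℝ ∧
    0 < α - ‖v‖ ^ 2 + 2 * γ * μ + 2 * ⟪v, x - v⟫_ℝ := by
  have hs : 0 < α - ‖v‖ ^ 2 := sub_pos.mpr hv
  have hball : {u : EuclideanSpace ℝ (Fin n) | ‖u‖ ^ 2 < α} ∈ nhds v :=
    (isOpen_lt (continuous_norm.pow 2) continuous_const).mem_nhds hv
  have hlocal : IsLocalMin
      (fun u => 1 / 2 * ‖x - u‖ ^ 2 - γ * μ * Real.log (α - ‖u‖ ^ 2)) v := by
    refine IsMinOn.isLocalMin (isMinOn_iff.mpr fun u hu => ?_) hball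
    rcases eq_or_ne u v with rfl | hne
    · exact le_rfl
    · exact (hmin u hu hne).le
  set t := 2 * (γ * μ) / (α - ‖v‖ ^ 2)
  have hxv : x - v = t • v := hlocal.sub_eq_smul_of_log_barrier hv
  have ht : 0 ≤ t := by positivity
  have hinner : ⟪v, x - v⟫_ℝ = t * ‖v‖ ^ 2 := by
    rw [hxv, real_inner_smul_right, real_inner_self_eq_norm_sq]
  have hx : x = (1 + t) • v := by rw [add_smul, one_smul, ← hxv]; abel
  refine ⟨?_, by rw [hinner]; positivity, ?_⟩
  · have hcoeff : (α - ‖v‖ ^ 2) / (α - ‖v‖ ^ 2 + 2 * γ * μ) * (1 + t) = 1 := by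
      simp only [t]
      field_simp
    rw [hx, smul_smul, hcoeff, one_smul]
  · rw [hinner]
    linarith [mul_pos hγ hμ, mul_nonneg ht (sq_nonneg ‖v‖)]

theorem ball_prox_fixed_point {n : ℕ} (α : ℝ) (hα : 0 < α) (γ μ : ℝ) (hγ : 0 < γ)
    (hμ : 0 < μ) (x v : EuclideanSpace ℝ (Fin n)) (hv : ‖v‖ ^ 2 < α)
    (hmin : ∀ u : EuclideanSpace ℝ (Fin n), ‖u‖ ^ 2 < α → u ≠ v →
      1 / 2 * ‖x - v‖ ^ 2 - γ * μ * Real.log (α - ‖v‖ ^ 2) <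
        1 / 2 * ‖x - u‖ ^ 2 - γ * μ * Real.log (α - ‖u‖ ^ 2)) :
    v = ((α - ‖v‖ ^ 2) / (α - ‖v‖ ^ 2 + 2 * γ * μ)) • x ∧
    0 ≤ ⟪v, x - v⟫_ℝ ∧
    0 < α - ‖v‖ ^ 2 + 2 * γ * μ + 2 * ⟪v, x - v⟫_ℝ :=
  ball_prox_fixed_point_general α γ μ hγ hμ x v hv hmin
end

section
/- Let K ≥ 1 be an integer, set θ₋₁ = 1, and for k ∈ {0, …, K−1} let W_k ∈ ℝ^{n×n} and define θ_k = ‖W_k ⋯ W_0‖ + Σ_{ℓ=0}^{k−1} Σ_{0 ≤ j_0 < ⋯ < j_ℓ ≤ k−1} ‖W_k ⋯ W_{j_ℓ+1}‖ · ‖W_{j_ℓ} ⋯ W_{j_{ℓ−1}+1}‖ ⋯ ‖W_{j_0} ⋯ W_0‖. Then for every k ∈ {0, …, K−1}, θ_k = Σ_{ℓ=0}^{k} θ_{ℓ−1} ‖W_k ⋯ W_ℓ‖. -/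
open scoped Matrix.Norms.L2Operator

/-- The ordered matrix product `W_k * W_{k-1} * ⋯ * W_l`. -/
noncomputable def matProdRange {n : ℕ} (W : ℕ → Matrix (Fin n) (Fin n) ℝ) (l k : ℕ) :
    Matrix (Fin n) (Fin n) ℝ :=
  (((List.range (k + 1 - l)).map fun i => W (k - i)).prod)

/-- Given cut points `j₀ < j₁ < ⋯ < jₗ` followed by the final index `k`, the product of the
spectral norms of the blocks `‖W_{j₀}⋯W_{lo}‖ ⋅ ‖W_{j₁}⋯W_{j₀+1}‖ ⋯ ‖W_k⋯W_{jₗ+1}‖`. -/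
noncomputable def blockNormProd {n : ℕ} (W : ℕ → Matrix (Fin n) (Fin n) ℝ) :
    ℕ → List ℕ → ℝ
  | _, [] => 1
  | lo, j :: rest => ‖matProdRange W lo j‖ * blockNormProd W (j + 1) rest

/-- `θ_k` defined by the explicit double sum
`θ_k = ‖W_k⋯W_0‖ + Σ_{ℓ=0}^{k-1} Σ_{0 ≤ j₀ < ⋯ < j_ℓ ≤ k-1} ‖W_k⋯W_{j_ℓ+1}‖⋯‖W_{j₀}⋯W_0‖`,
written as a sum over all subsets of `{0, …, k-1}` of the associated block-norm products. -/
noncomputable def thetaDoubleSum {n : ℕ} (W : ℕ → Matrix (Fin n) (Fin n) ℝ) (k : ℕ) : ℝ :=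
  ∑ S ∈ (Finset.range k).powerset, blockNormProd W 0 (S.sort (· ≤ ·) ++ [k])


/-!
Sort the subsets `S ⊆ {0, …, k-1}` indexing the terms of `θ_k` by their largest element `l`.
The last block of such a term is `W_k ⋯ W_{l+1}`, and the remaining blocks run exactly over the
terms of `θ_l`; the empty subset gives `‖W_k ⋯ W_0‖ = θ_{-1} ‖W_k ⋯ W_0‖`.
-/

open scoped List in
lemma Finset.sort_insert_of_forall_lt {α : Type*} [LinearOrder α] {s : Finset α} {a : α}
    (h : ∀ b ∈ s, b < a) : (insert a s).sort (· ≤ ·) = s.sort (· ≤ ·) ++ [a] := by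
  have ha : a ∉ s := fun has => lt_irrefl a (h a has)
  refine List.Perm.eq_of_pairwise' (Finset.pairwise_sort _ _) ?_ ?_
  · refine List.pairwise_append.mpr ⟨Finset.pairwise_sort _ _, List.pairwise_singleton _ _, ?_⟩
    rintro b hb c hc
    rw [List.mem_singleton.mp hc]
    exact (h b ((Finset.mem_sort _).mp hb)).le
  · calc (insert a s).sort (· ≤ ·) ~ (insert a s).toList := Finset.sort_perm_toList _ _
      _ ~ a :: s.toList := Finset.toList_insert ha
      _ ~ a :: s.sort (· ≤ ·) := (Finset.sort_perm_toList _ _).symm.cons a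
      _ ~ s.sort (· ≤ ·) ++ [a] := (List.perm_append_singleton _ _).symm

section

variable {n : ℕ} (W : ℕ → Matrix (Fin n) (Fin n) ℝ)

lemma blockNormProd_append_pair (xs : List ℕ) (lo a b : ℕ) :
    blockNormProd W lo (xs ++ [a, b]) =
      blockNormProd W lo (xs ++ [a]) * ‖matProdRange W (a + 1) b‖ := by
  induction xs generalizing lo with
  | nil => simp only [List.nil_append, blockNormProd, mul_one]
  | cons x xs ih => simp only [List.cons_append, blockNormProd, ih, mul_assoc]

lemma sum_powerset_range_blockNormProd (k m : ℕ) :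
    ∑ S ∈ (Finset.range k).powerset, blockNormProd W 0 (S.sort (· ≤ ·) ++ [m]) =
      ‖matProdRange W 0 m‖ +
        ∑ l ∈ Finset.range k, thetaDoubleSum W l * ‖matProdRange W (l + 1) m‖ := by
  induction k with
  | zero => simp [blockNormProd]
  | succ k ih =>
    have max_eq_k : ∀ S ∈ (Finset.range k).powerset,
        blockNormProd W 0 ((insert k S).sort (· ≤ ·) ++ [m]) =
          blockNormProd W 0 (S.sort (· ≤ ·) ++ [k]) * ‖matProdRange W (k + 1) m‖ := by
      intro S hS
      have hS_lt : ∀ b ∈ S, b < k := fun b hb =>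
        Finset.mem_range.mp (Finset.mem_powerset.mp hS hb)
      rw [Finset.sort_insert_of_forall_lt hS_lt, List.append_assoc, List.singleton_append,
        blockNormProd_append_pair]
    rw [Finset.range_add_one, Finset.sum_powerset_insert Finset.notMem_range_self, ih,
      Finset.sum_congr rfl max_eq_k, ← Finset.sum_mul, ← thetaDoubleSum,
      Finset.sum_insert Finset.notMem_range_self]
    ring

lemma thetaDoubleSum_eq (k : ℕ) :
    thetaDoubleSum W k =
      ‖matProdRange W 0 k‖ +
        ∑ l ∈ Finset.range k, thetaDoubleSum W l * ‖matProdRange W (l + 1) k‖ :=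
  sum_powerset_range_blockNormProd W k k

end

theorem theta_recursion_general {n K : ℕ} (W : ℕ → Matrix (Fin n) (Fin n) ℝ)
    (θ : ℕ → ℝ) (hθ0 : θ 0 = 1)
    (hθ : ∀ k, k ≤ K - 1 → θ (k + 1) = thetaDoubleSum W k) :
    ∀ k, k ≤ K - 1 →
      θ (k + 1) = ∑ l ∈ Finset.range (k + 1), θ l * ‖matProdRange W l k‖ := by
  intro k hk
  rw [hθ k hk, thetaDoubleSum_eq, Finset.sum_range_succ', hθ0, one_mul, add_comm]
  congr 1
  refine Finset.sum_congr rfl fun l hl => ?_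
  rw [hθ l (by have := Finset.mem_range.mp hl; omega)]

theorem theta_recursion {n K : ℕ} (hK : 1 ≤ K) (W : ℕ → Matrix (Fin n) (Fin n) ℝ)
    (θ : ℕ → ℝ) (hθ0 : θ 0 = 1)
    (hθ : ∀ k, k ≤ K - 1 → θ (k + 1) = thetaDoubleSum W k) :
    ∀ k, k ≤ K - 1 →
      θ (k + 1) = ∑ l ∈ Finset.range (k + 1), θ l * ‖matProdRange W l k‖ :=
  theta_recursion_general W θ hθ0 hθ
end

section
/- Let K ≥ 1 be an integer, θ > 0, α ∈ [1/2, 1], let W be a symmetric n×n real matrix, and let β₋ and β₊ denote the smallest and largest eigenvalues of W, respectively. Then the inequality ‖W − 2^K (1−α) Iₙ‖ − ‖W‖ + 2θ ≤ 2^K α holds if and only if one of the following three conditions holds: (i) β₊ + β₋ ≤ 0 and θ ≤ 2^{K−1}(2α − 1); (ii) 0 ≤ β₊ + β₋ ≤ 2^{K+1}(1−α) and 2θ ≤ β₊ + β₋ + 2^K (2α − 1); (iii) 2^{K+1}(1−α) ≤ β₊ + β₋ and θ ≤ 2^{K−1}. -/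
open scoped Matrix.Norms.L2Operator

/-! For a self-adjoint matrix the operator norm is the largest absolute value of an eigenvalue,
so `‖W‖ = max β₊ (-β₋)`; subtracting `c • 1` shifts the spectrum by `-c`, so
`‖W - c • 1‖ = max (β₊ - c) (c - β₋)`, where `c = 2^K (1 - α) ≥ 0`. The inequality is then
piecewise linear in `β₊ + β₋` with breakpoints `0` and `2c`, which give the three cases. -/

theorem Matrix.mem_spectrum_iff_exists_mulVec_eq_smul {K n : Type*} [Field K] [Fintype n]
    [DecidableEq n] (A : Matrix n n K) (μ : K) :
    μ ∈ spectrum K A ↔ ∃ v, v ≠ 0 ∧ A.mulVec v = μ • v := by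
  rw [← Matrix.spectrum_toLin', ← Module.End.hasEigenvalue_iff_mem_spectrum]
  constructor
  · intro h
    obtain ⟨v, hv, hv0⟩ := h.exists_hasEigenvector
    exact ⟨v, hv0, Module.End.mem_eigenspace_iff.1 hv⟩
  · rintro ⟨v, hv0, hAv⟩
    exact Module.End.hasEigenvalue_of_hasEigenvector (x := v)
      ⟨Module.End.mem_eigenspace_iff.2 hAv, hv0⟩

section SelfAdjoint

variable {A : Type*} [NormedRing A] [StarRing A] [NormedAlgebra ℝ A]
  [IsometricContinuousFunctionalCalculus ℝ A IsSelfAdjoint] {a : A} {m M : ℝ}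

open IsometricContinuousFunctionalCalculus in
theorem IsSelfAdjoint.norm_eq_max_of_isLeast_of_isGreatest (ha : IsSelfAdjoint a)
    (hm : IsLeast (spectrum ℝ a) m) (hM : IsGreatest (spectrum ℝ a) M) : ‖a‖ = max M (-m) := by
  have : Nontrivial A := by
    by_contra h
    rw [not_nontrivial_iff_subsingleton] at h
    simpa [spectrum.of_subsingleton] using hm.1
  obtain ⟨x, hx, hxa⟩ := (isGreatest_norm_spectrum (𝕜 := ℝ) a ha).1
  refine le_antisymm ?_ (max_le ?_ ?_)
  · rw [← hxa]
    exact abs_le'.2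
      ⟨(hM.2 hx).trans (le_max_left _ _), (neg_le_neg (hm.2 hx)).trans (le_max_right _ _)⟩
  · exact (le_abs_self M).trans (norm_spectrum_le a hM.1 ha)
  · exact (neg_le_abs m).trans (norm_spectrum_le a hm.1 ha)

theorem IsSelfAdjoint.norm_sub_algebraMap_eq_max [StarModule ℝ A] (ha : IsSelfAdjoint a) (c : ℝ)
    (hm : IsLeast (spectrum ℝ a) m) (hM : IsGreatest (spectrum ℝ a) M) :
    ‖a - algebraMap ℝ A c‖ = max (M - c) (c - m) := by
  have hshift : spectrum ℝ (a - algebraMap ℝ A c) = (· - c) '' spectrum ℝ a := by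
    rw [← spectrum.sub_singleton_eq, Set.sub_singleton]
  have hmono : Monotone (· - c : ℝ → ℝ) := fun _ _ h => sub_le_sub_right h c
  rw [(ha.sub (.algebraMap A (.all c))).norm_eq_max_of_isLeast_of_isGreatest
    (hshift ▸ hmono.map_isLeast hm) (hshift ▸ hmono.map_isGreatest hM), neg_sub]

end SelfAdjoint

theorem max_sub_max_add_le_iff {m M c d t : ℝ} (hc : 0 ≤ c) :
    max (M - c) (c - m) - max M (-m) + t ≤ d ↔
      (M + m ≤ 0 ∧ t ≤ d - c) ∨ (0 ≤ M + m ∧ M + m ≤ 2 * c ∧ t ≤ M + m + (d - c)) ∨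
        (2 * c ≤ M + m ∧ t ≤ d + c) := by
  rcases le_total (M + m) 0 with hs | hs
  · rw [max_eq_right (by linarith : M ≤ -m), max_eq_right (by linarith : M - c ≤ c - m)]
    constructor
    · exact fun h => .inl ⟨hs, by linarith⟩
    · rintro (⟨-, h⟩ | ⟨-, -, h⟩ | ⟨h₁, h⟩) <;> linarith
  rw [max_eq_left (by linarith : -m ≤ M)]
  rcases le_total (M + m) (2 * c) with hs' | hs'
  · rw [max_eq_right (by linarith : M - c ≤ c - m)]
    constructor
    · exact fun h => .inr (.inl ⟨hs, hs', by linarith⟩)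
    · rintro (⟨h₁, h⟩ | ⟨-, -, h⟩ | ⟨h₁, h⟩) <;> linarith
  · rw [max_eq_left (by linarith : c - m ≤ M - c)]
    constructor
    · exact fun h => .inr (.inr ⟨hs', by linarith⟩)
    · rintro (⟨h₁, h⟩ | ⟨h₁, h₂, h⟩ | ⟨-, h⟩) <;> linarith

theorem spectral_condition_equiv_general {n : ℕ} (K : ℕ) (hK : 1 ≤ K) (θ : ℝ)
    (α : ℝ) (hα : α ∈ Set.Icc (1 / 2 : ℝ) 1)
    (W : Matrix (Fin n) (Fin n) ℝ) (hW : W.IsSymm) (βm βp : ℝ)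
    (hβm : (∃ v : Fin n → ℝ, v ≠ 0 ∧ W.mulVec v = βm • v) ∧
      ∀ β : ℝ, (∃ v : Fin n → ℝ, v ≠ 0 ∧ W.mulVec v = β • v) → βm ≤ β)
    (hβp : (∃ v : Fin n → ℝ, v ≠ 0 ∧ W.mulVec v = βp • v) ∧
      ∀ β : ℝ, (∃ v : Fin n → ℝ, v ≠ 0 ∧ W.mulVec v = β • v) → β ≤ βp) :
    ‖W - ((2 : ℝ) ^ K * (1 - α)) • (1 : Matrix (Fin n) (Fin n) ℝ)‖ - ‖W‖ + 2 * θ ≤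
        (2 : ℝ) ^ K * α ↔
      (βp + βm ≤ 0 ∧ θ ≤ (2 : ℝ) ^ (K - 1) * (2 * α - 1)) ∨
      (0 ≤ βp + βm ∧ βp + βm ≤ (2 : ℝ) ^ (K + 1) * (1 - α) ∧
        2 * θ ≤ βp + βm + (2 : ℝ) ^ K * (2 * α - 1)) ∨
      ((2 : ℝ) ^ (K + 1) * (1 - α) ≤ βp + βm ∧ θ ≤ (2 : ℝ) ^ (K - 1)) := by
  have hσ : spectrum ℝ W = {β | ∃ v : Fin n → ℝ, v ≠ 0 ∧ W.mulVec v = β • v} :=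
    Set.ext W.mem_spectrum_iff_exists_mulVec_eq_smul
  have hm : IsLeast (spectrum ℝ W) βm := by rw [hσ]; exact hβm
  have hM : IsGreatest (spectrum ℝ W) βp := by rw [hσ]; exact hβp
  have hsa : IsSelfAdjoint W := Matrix.isHermitian_iff_isSelfAdjoint.1 hW
  have hc : (0 : ℝ) ≤ 2 ^ K * (1 - α) := mul_nonneg (by positivity) (sub_nonneg.2 hα.2)
  rw [← Algebra.algebraMap_eq_smul_one, hsa.norm_sub_algebraMap_eq_max _ hm hM,
    hsa.norm_eq_max_of_isLeast_of_isGreatest hm hM, max_sub_max_add_le_iff hc]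
  obtain ⟨k, rfl⟩ := Nat.exists_eq_add_of_le' hK
  simp only [Nat.add_sub_cancel, pow_succ]
  refine or_congr (and_congr ?_ ?_)
    (or_congr (and_congr ?_ (and_congr ?_ ?_)) (and_congr ?_ ?_)) <;>
    constructor <;> intro <;> linarith

theorem spectral_condition_equiv {n : ℕ} (K : ℕ) (hK : 1 ≤ K) (θ : ℝ) (hθ : 0 < θ)
    (α : ℝ) (hα : α ∈ Set.Icc (1 / 2 : ℝ) 1)
    (W : Matrix (Fin n) (Fin n) ℝ) (hW : W.IsSymm) (βm βp : ℝ)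
    (hβm : (∃ v : Fin n → ℝ, v ≠ 0 ∧ W.mulVec v = βm • v) ∧
      ∀ β : ℝ, (∃ v : Fin n → ℝ, v ≠ 0 ∧ W.mulVec v = β • v) → βm ≤ β)
    (hβp : (∃ v : Fin n → ℝ, v ≠ 0 ∧ W.mulVec v = βp • v) ∧
      ∀ β : ℝ, (∃ v : Fin n → ℝ, v ≠ 0 ∧ W.mulVec v = β • v) → β ≤ βp) :
    ‖W - ((2 : ℝ) ^ K * (1 - α)) • (1 : Matrix (Fin n) (Fin n) ℝ)‖ - ‖W‖ + 2 * θ ≤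
        (2 : ℝ) ^ K * α ↔
      (βp + βm ≤ 0 ∧ θ ≤ (2 : ℝ) ^ (K - 1) * (2 * α - 1)) ∨
      (0 ≤ βp + βm ∧ βp + βm ≤ (2 : ℝ) ^ (K + 1) * (1 - α) ∧
        2 * θ ≤ βp + βm + (2 : ℝ) ^ K * (2 * α - 1)) ∨
      ((2 : ℝ) ^ (K + 1) * (1 - α) ≤ βp + βm ∧ θ ≤ (2 : ℝ) ^ (K - 1)) :=
  spectral_condition_equiv_general K hK θ α hα W hW βm βp hβm hβp
end

section
/- Let K ≥ 1 be an integer, α ∈ [1/2, 1], y ∈ ℝⁿ, and for k ∈ {0, …, K−1} let γ_k > 0, λ_k > 0, μ_k > 0. Let H and D be n×n real matrices such that HᵀH and DᵀD are simultaneously diagonalized by a common orthogonal matrix. Let B : ℝⁿ → ℝ ∪ {+∞} be a proper convex lower semicontinuous function given as the logarithmic barrier B(x) = −Σ_{i=1}^{p} ln(c_i(x)) on {x : c_i(x) > 0 for all i} and +∞ elsewhere, where each −c_i is proper convex lower semicontinuous and {x : c_i(x) > 0 for all i} is nonempty. For k ∈ {0, …, K−1} set W_k = Iₙ − γ_k (HᵀH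 + λ_k DᵀD), b_k = γ_k Hᵀy, and let R_k : ℝⁿ → ℝⁿ map each z to the unique minimizer over u ∈ ℝⁿ of (1/2)‖z − u‖² + γ_k μ_k B(u). Let β₋ and β₊ be the smallest and largest eigenvalues of W = W_{K−1} ⋯ W_0 and let θ_{K−1} be defined by θ₋₁ = 1 and θ_k = Σ_{ℓ=0}^{k} θ_{ℓ−1} ‖W_k ⋯ W_ℓ‖. If one of the following holds: (i) β₊ + β₋ ≤ 0 and θ_{K−1} ≤ 2^{K−1}(2α − 1); (ii) 0 ≤ β₊ + β₋ ≤ 2^{K+1}(1−α) and 2θ_{K−1} ≤ β₊ + β₋ + 2^K(2α − 1); (iii) 2^{K+1}(1−α) ≤ β₊ + β₋ and θ_{K−1} ≤ 2^{K−1}; then the operator T = R_{K−1} ∘ (W_{K−1}· + b_{K−1}) ∘ ⋯ ∘ R_0 ∘ (W_0· + b_0) is α-averaged, i.e. there exists a nonexpansive operator R : ℝⁿ → ℝⁿ such that T = (1−α) Id + α R. -/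
open Matrix
open scoped Matrix.Norms.L2Operator

/-- Logarithmic barrier associated with the constraints `c i x > 0`. -/
noncomputable def logBarrier {n p : ℕ} (c : Fin p → EuclideanSpace ℝ (Fin n) → ℝ)
    (x : EuclideanSpace ℝ (Fin n)) : EReal :=
  if ∀ i, 0 < c i x then ((-(∑ i, Real.log (c i x)) : ℝ) : EReal) else ⊤

/-- The composition `R_{k-1} ∘ (W_{k-1}· + b_{k-1}) ∘ ⋯ ∘ R_0 ∘ (W_0· + b_0)`,
where `A k = W_k· + b_k`. -/
def iterLayers {n : ℕ} (R A : ℕ → EuclideanSpace ℝ (Fin n) → EuclideanSpace ℝ (Fin n)) :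
    ℕ → EuclideanSpace ℝ (Fin n) → EuclideanSpace ℝ (Fin n)
  | 0 => id
  | k + 1 => fun x => R k (A k (iterLayers R A k x))

/-!
Each `R_k` is the proximity operator of the convex function `γ_k μ_k B`, hence firmly
nonexpansive: `R_k = (Id + S_k) / 2` with `S_k` nonexpansive. Peeling off one layer at a time,
`T x - T x' = 2^{-K} W (x - x') + e`, where `e` is a sum of terms
`2^{-(K-k)} W_{K-1} ⋯ W_{k+1} (S_k z - S_k z')`. By induction the `k`-th of these reflected
differences has norm at most `2^{-k} θ_k ‖x - x'‖`, which is where the recursion for `θ` comes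
from, and in total `‖e‖ ≤ 2^{-K} (2 θ_{K-1} - ‖W‖) ‖x - x'‖`. Because `W` is diagonalised by the
common orthogonal matrix, `‖2^{-K} W - (1 - α) Id‖` is the largest `|2^{-K} d - (1 - α)|` over the
eigenvalues `d ∈ [β₋, β₊]` of `W`, and each of (i)–(iii) makes the two bounds add up to at most
`α`. Hence `‖T x - T x' - (1 - α) (x - x')‖ ≤ α ‖x - x'‖`, which is α-averagedness.
-/

open scoped RealInnerProductSpace
open Set Filter Topology

section Prox

variable {E : Type*} [NormedAddCommGroup E] [InnerProductSpace ℝ E]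

theorem convexOn_neg_sum_log {ι : Type*} [Fintype ι] {c : ι → E → ℝ}
    (hc : ∀ i, ConcaveOn ℝ univ (c i)) :
    ConvexOn ℝ {x | ∀ i, 0 < c i x} fun x => -∑ i, Real.log (c i x) := by
  refine ⟨?_, fun x hx y hy a b ha hb hab => ?_⟩
  · simpa [Set.ofPred_forall] using convex_iInter fun i => (hc i).convex_gt 0
  have hlog : ∀ i, a * Real.log (c i x) + b * Real.log (c i y) ≤
      Real.log (c i (a • x + b • y)) := fun i => by
    have hmix : 0 < a * c i x + b * c i y := by
      rcases ha.eq_or_lt with rfl | ha'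
      · simpa [show b = 1 by linarith] using hy i
      · exact add_pos_of_pos_of_nonneg (mul_pos ha' (hx i)) (mul_nonneg hb (hy i).le)
    calc a * Real.log (c i x) + b * Real.log (c i y) ≤ Real.log (a * c i x + b * c i y) :=
          strictConcaveOn_log_Ioi.concaveOn.2 (hx i) (hy i) ha hb hab
      _ ≤ Real.log (c i (a • x + b • y)) :=
          Real.log_le_log hmix ((hc i).2 (mem_univ x) (mem_univ y) ha hb hab)
  have hsum := Finset.sum_le_sum fun i (_ : i ∈ Finset.univ) => hlog i
  rw [Finset.sum_add_distrib, ← Finset.mul_sum, ← Finset.mul_sum] at hsum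
  simp only [smul_eq_mul]
  linarith

theorem inner_sub_le_of_isMinOn_prox {S : Set E} {g : E → ℝ} (hg : ConvexOn ℝ S g)
    {z p u : E} (hp : p ∈ S) (hmin : IsMinOn (fun v => 1 / 2 * ‖z - v‖ ^ 2 + g v) S p)
    (hu : u ∈ S) : ⟪z - p, u - p⟫ ≤ g u - g p := by
  have hstep : ∀ t ∈ Ioc (0 : ℝ) 1, ⟪z - p, u - p⟫ ≤ t / 2 * ‖u - p‖ ^ 2 + (g u - g p) := by
    rintro t ⟨ht₀, ht₁⟩
    have hseg : (1 - t) • p + t • u ∈ S := hg.1 hp hu (by linarith) ht₀.le (by ring)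
    have hconv : g ((1 - t) • p + t • u) ≤ (1 - t) * g p + t * g u :=
      hg.2 hp hu (by linarith) ht₀.le (by ring)
    have hdist : z - ((1 - t) • p + t • u) = (z - p) - t • (u - p) := by module
    have hmin' : 1 / 2 * ‖z - p‖ ^ 2 + g p ≤
        1 / 2 * ‖(z - p) - t • (u - p)‖ ^ 2 + g ((1 - t) • p + t • u) := by
      simpa [hdist] using hmin hseg
    rw [norm_sub_sq_real (z - p), norm_smul, inner_smul_right, Real.norm_eq_abs,
      abs_of_pos ht₀] at hmin'
    have : t * ⟪z - p, u - p⟫ ≤ t * (t / 2 * ‖u - p‖ ^ 2 + (g u - g p)) := by nlinarith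
    exact le_of_mul_le_mul_left this ht₀
  have hlim : Tendsto (fun t : ℝ => t / 2 * ‖u - p‖ ^ 2 + (g u - g p)) (𝓝[>] 0)
      (𝓝 (g u - g p)) := by
    have : Continuous fun t : ℝ => t / 2 * ‖u - p‖ ^ 2 + (g u - g p) := by fun_prop
    simpa using (this.tendsto 0).mono_left nhdsWithin_le_nhds
  exact ge_of_tendsto hlim (eventually_of_mem (Ioc_mem_nhdsGT one_pos) hstep)

theorem norm_sub_sq_le_inner_of_isMinOn_prox {S : Set E} {g : E → ℝ} (hg : ConvexOn ℝ S g)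
    {F : E → E} (hFS : ∀ z, F z ∈ S)
    (hF : ∀ z, IsMinOn (fun v => 1 / 2 * ‖z - v‖ ^ 2 + g v) S (F z)) (z₁ z₂ : E) :
    ‖F z₁ - F z₂‖ ^ 2 ≤ ⟪z₁ - z₂, F z₁ - F z₂⟫ := by
  have h₁ := inner_sub_le_of_isMinOn_prox hg (hFS z₁) (hF z₁) (hFS z₂)
  have h₂ := inner_sub_le_of_isMinOn_prox hg (hFS z₂) (hF z₂) (hFS z₁)
  have hsum : ⟪z₁ - z₂, F z₁ - F z₂⟫ - ‖F z₁ - F z₂‖ ^ 2 =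
      -(⟪z₁ - F z₁, F z₂ - F z₁⟫ + ⟪z₂ - F z₂, F z₁ - F z₂⟫) := by
    rw [← real_inner_self_eq_norm_sq, ← neg_sub (F z₁) (F z₂), inner_neg_right]
    simp only [inner_sub_left, inner_sub_right, real_inner_comm]
    ring
  linarith

theorem norm_two_smul_sub_le_of_sq_le_inner {a b : E} (h : ‖a‖ ^ 2 ≤ ⟪b, a⟫) :
    ‖(2 : ℝ) • a - b‖ ≤ ‖b‖ := by
  refine (sq_le_sq₀ (norm_nonneg _) (norm_nonneg _)).1 ?_
  rw [norm_sub_sq_real, norm_smul, inner_smul_left, real_inner_comm]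
  norm_num
  nlinarith

end Prox

section LogBarrier

variable {n p : ℕ} {c : Fin p → EuclideanSpace ℝ (Fin n) → ℝ}

theorem logBarrier_prox_spec (hc_int : ∃ x, ∀ i, 0 < c i x) {κ : ℝ} (hκ : 0 < κ)
    {F : EuclideanSpace ℝ (Fin n) → EuclideanSpace ℝ (Fin n)}
    (hF : ∀ z u, u ≠ F z →
      ((1 / 2 * ‖z - F z‖ ^ 2 : ℝ) : EReal) + (κ : EReal) * logBarrier c (F z) <
        ((1 / 2 * ‖z - u‖ ^ 2 : ℝ) : EReal) + (κ : EReal) * logBarrier c u)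
    (z : EuclideanSpace ℝ (Fin n)) :
    F z ∈ {x | ∀ i, 0 < c i x} ∧
      IsMinOn (fun v => 1 / 2 * ‖z - v‖ ^ 2 + κ * -∑ i, Real.log (c i v))
        {x | ∀ i, 0 < c i x} (F z) := by
  have hmem : ∀ i, 0 < c i (F z) := by
    by_contra hout
    obtain ⟨x, hx⟩ := hc_int
    have hlt := hF z x (by rintro rfl; exact hout hx)
    rw [logBarrier, if_neg hout, EReal.coe_mul_top_of_pos hκ, EReal.coe_add_top] at hlt
    exact not_top_lt hlt
  refine ⟨hmem, isMinOn_iff.2 fun u (hu : ∀ i, 0 < c i u) => ?_⟩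
  rcases eq_or_ne u (F z) with rfl | hne
  · exact le_rfl
  have hlt := hF z u hne
  rw [logBarrier, logBarrier, if_pos hmem, if_pos hu, ← EReal.coe_mul, ← EReal.coe_mul,
    ← EReal.coe_add, ← EReal.coe_add, EReal.coe_lt_coe_iff] at hlt
  exact hlt.le

theorem norm_two_smul_sub_le_of_logBarrier_prox
    (hc : ∀ i, ConvexOn ℝ univ fun x => -(c i x)) (hc_int : ∃ x, ∀ i, 0 < c i x)
    {κ : ℝ} (hκ : 0 < κ) {F : EuclideanSpace ℝ (Fin n) → EuclideanSpace ℝ (Fin n)}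
    (hF : ∀ z u, u ≠ F z →
      ((1 / 2 * ‖z - F z‖ ^ 2 : ℝ) : EReal) + (κ : EReal) * logBarrier c (F z) <
        ((1 / 2 * ‖z - u‖ ^ 2 : ℝ) : EReal) + (κ : EReal) * logBarrier c u)
    (z₁ z₂ : EuclideanSpace ℝ (Fin n)) :
    ‖(2 : ℝ) • (F z₁ - F z₂) - (z₁ - z₂)‖ ≤ ‖z₁ - z₂‖ :=
  norm_two_smul_sub_le_of_sq_le_inner <| norm_sub_sq_le_inner_of_isMinOn_prox
    ((convexOn_neg_sum_log fun i => neg_convexOn_iff.1 (hc i)).smul hκ.le)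
    (fun z => (logBarrier_prox_spec hc_int hκ hF z).1)
    (fun z => (logBarrier_prox_spec hc_int hκ hF z).2) z₁ z₂

end LogBarrier

section DescProd

variable {M : Type*} [Monoid M]

/-- `descProd f l k = f (k - 1) * ⋯ * f l`, and `1` when `k ≤ l`. -/
def descProd (f : ℕ → M) (l : ℕ) : ℕ → M
  | 0 => 1
  | k + 1 => if l ≤ k then f k * descProd f l k else 1

theorem descProd_succ (f : ℕ → M) {l k : ℕ} (h : l ≤ k) :
    descProd f l (k + 1) = f k * descProd f l k := if_pos h

theorem descProd_self (f : ℕ → M) (k : ℕ) : descProd f k k = 1 := by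
  cases k with
  | zero => rfl
  | succ k => exact if_neg (Nat.not_succ_le_self k)

theorem map_descProd {N F : Type*} [Monoid N] [FunLike F M N] [MonoidHomClass F M N] (φ : F)
    (f : ℕ → M) (l k : ℕ) : φ (descProd f l k) = descProd (fun i => φ (f i)) l k := by
  induction k with
  | zero => exact map_one φ
  | succ k ih => simp only [descProd]; split_ifs <;> simp [ih]

theorem matProdRange_eq_descProd {n : ℕ} (W : ℕ → Matrix (Fin n) (Fin n) ℝ) {l k : ℕ}
    (h : l ≤ k) : matProdRange W l k = descProd W l (k + 1) := by
  induction k, h using Nat.le_induction with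
  | base => simp [matProdRange, descProd_succ, descProd_self]
  | succ k hlk ih =>
    rw [descProd_succ W (by omega), ← ih, matProdRange, matProdRange,
      show k + 1 + 1 - l = k + 1 - l + 1 by omega, List.range_succ_eq_map]
    simp [Function.comp_def]

end DescProd

section Layers

open Finset

variable {E : Type*} [NormedAddCommGroup E] [NormedSpace ℝ E] {K : ℕ}
  {W : ℕ → E →L[ℝ] E} {T : ℕ → E → E} {θ : ℕ → ℝ}

theorem theta_nonneg (hθ0 : θ 0 = 1)
    (hθ : ∀ k < K, θ (k + 1) = ∑ l ∈ range (k + 1), θ l * ‖descProd W l (k + 1)‖) :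
    ∀ k ≤ K, 0 ≤ θ k := by
  intro k
  induction k using Nat.strong_induction_on with
  | _ k ih =>
    intro hk
    cases k with
    | zero => simp [hθ0]
    | succ k =>
      rw [hθ k (by omega)]
      exact sum_nonneg fun l hl =>
        mul_nonneg (ih l (mem_range.1 hl) (by have := mem_range.1 hl; omega)) (norm_nonneg _)

/- Stated for an arbitrary operator `C` applied to the error, so that the induction step can call
the hypothesis at `C * W k` (to propagate the previous error) and at `W k` (to bound the new
reflected difference). -/
theorem norm_apply_layerError_le (hT0 : ∀ x, T 0 x = x)
    (hT : ∀ k < K, ∀ x x', ‖(2 : ℝ) • (T (k + 1) x - T (k + 1) x') - W k (T k x - T k x')‖ ≤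
      ‖W k (T k x - T k x')‖)
    (hθ0 : θ 0 = 1)
    (hθ : ∀ k < K, θ (k + 1) = ∑ l ∈ range (k + 1), θ l * ‖descProd W l (k + 1)‖) :
    ∀ k ≤ K, ∀ (C : E →L[ℝ] E) (x x' : E),
      ‖C (T k x - T k x' - (2⁻¹ : ℝ) ^ k • descProd W 0 k (x - x'))‖ ≤
        (2⁻¹ : ℝ) ^ k * (∑ m ∈ range k, θ (m + 1) * ‖C * descProd W (m + 1) k‖) * ‖x - x'‖ := by
  intro k
  induction k with
  | zero => intro _ C x x'; simp [hT0, descProd]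
  | succ k ih =>
    intro hk C x x'
    set v := x - x'
    set e := T k x - T k x' - (2⁻¹ : ℝ) ^ k • descProd W 0 k v
    set Δ := (2 : ℝ) • (T (k + 1) x - T (k + 1) x') - W k (T k x - T k x')
    have hWδ : W k (T k x - T k x') = W k e + (2⁻¹ : ℝ) ^ k • descProd W 0 (k + 1) v := by
      rw [descProd_succ W (Nat.zero_le k), mul_apply_eq_comp, ← map_smul, ← map_add,
        sub_add_cancel]
    have hrec : ∀ m ∈ range k, descProd W (m + 1) (k + 1) = W k * descProd W (m + 1) k :=
      fun m hm => descProd_succ W (mem_range.1 hm)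
    have hΔ : ‖Δ‖ ≤ (2⁻¹ : ℝ) ^ k * θ (k + 1) * ‖v‖ :=
      calc ‖Δ‖ ≤ ‖W k e + (2⁻¹ : ℝ) ^ k • descProd W 0 (k + 1) v‖ := hWδ ▸ hT k hk x x'
        _ ≤ ‖W k e‖ + (2⁻¹ : ℝ) ^ k * (‖descProd W 0 (k + 1)‖ * ‖v‖) := by
          grw [norm_add_le, norm_smul, (descProd W 0 (k + 1)).le_opNorm,
            Real.norm_of_nonneg (by positivity)]
        _ ≤ (2⁻¹ : ℝ) ^ k * (∑ m ∈ range k, θ (m + 1) * ‖W k * descProd W (m + 1) k‖) * ‖v‖ +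
            (2⁻¹ : ℝ) ^ k * (‖descProd W 0 (k + 1)‖ * ‖v‖) := by grw [ih (by omega) (W k) x x']
        _ = (2⁻¹ : ℝ) ^ k * θ (k + 1) * ‖v‖ := by
          have hsum : ∑ m ∈ range k, θ (m + 1) * ‖W k * descProd W (m + 1) k‖ =
              ∑ m ∈ range k, θ (m + 1) * ‖descProd W (m + 1) (k + 1)‖ :=
            sum_congr rfl fun m hm => by rw [hrec m hm]
          rw [hθ k hk, sum_range_succ', hθ0, hsum]
          ring
    have hsplit : C (T (k + 1) x - T (k + 1) x' - (2⁻¹ : ℝ) ^ (k + 1) • descProd W 0 (k + 1) v) =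
        (2⁻¹ : ℝ) • (C (W k e) + C Δ) := by
      have hD : T (k + 1) x - T (k + 1) x' = (2⁻¹ : ℝ) • (W k (T k x - T k x') + Δ) := by
        simp only [Δ]; module
      rw [hD, hWδ, pow_succ]
      simp only [map_sub, map_add, map_smul]
      module
    calc _ = 2⁻¹ * ‖C (W k e) + C Δ‖ := by rw [hsplit, norm_smul]; norm_num
      _ ≤ 2⁻¹ * (‖C (W k e)‖ + ‖C‖ * ‖Δ‖) := by grw [norm_add_le, C.le_opNorm Δ]
      _ ≤ 2⁻¹ * ((2⁻¹ : ℝ) ^ k *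
            (∑ m ∈ range k, θ (m + 1) * ‖C * W k * descProd W (m + 1) k‖) * ‖v‖ +
            ‖C‖ * ((2⁻¹ : ℝ) ^ k * θ (k + 1) * ‖v‖)) := by
          gcongr
          exact ih (by omega) (C * W k) x x'
      _ = _ := by
        have hsum : ∑ m ∈ range k, θ (m + 1) * ‖C * W k * descProd W (m + 1) k‖ =
            ∑ m ∈ range k, θ (m + 1) * ‖C * descProd W (m + 1) (k + 1)‖ :=
          sum_congr rfl fun m hm => by rw [hrec m hm, mul_assoc]
        rw [sum_range_succ, descProd_self, mul_one, hsum]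
        ring

theorem norm_layerError_le (hK : 0 < K) (hT0 : ∀ x, T 0 x = x)
    (hT : ∀ k < K, ∀ x x', ‖(2 : ℝ) • (T (k + 1) x - T (k + 1) x') - W k (T k x - T k x')‖ ≤
      ‖W k (T k x - T k x')‖)
    (hθ0 : θ 0 = 1)
    (hθ : ∀ k < K, θ (k + 1) = ∑ l ∈ range (k + 1), θ l * ‖descProd W l (k + 1)‖) (x x' : E) :
    ‖T K x - T K x' - (2⁻¹ : ℝ) ^ K • descProd W 0 K (x - x')‖ ≤
      (2⁻¹ : ℝ) ^ K * (2 * θ K - ‖descProd W 0 K‖) * ‖x - x'‖ := by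
  obtain ⟨k, rfl⟩ : ∃ k, K = k + 1 := ⟨K - 1, by omega⟩
  have h := norm_apply_layerError_le hT0 hT hθ0 hθ (k + 1) le_rfl 1 x x'
  simp only [one_apply_eq_self, one_mul] at h
  refine h.trans ?_
  gcongr
  have hθk := hθ k (by omega)
  have hone : θ (k + 1) * ‖(1 : E →L[ℝ] E)‖ ≤ θ (k + 1) :=
    mul_le_of_le_one_right (theta_nonneg hθ0 hθ _ le_rfl) ContinuousLinearMap.norm_id_le
  rw [sum_range_succ', hθ0, one_mul] at hθk
  rw [sum_range_succ, descProd_self]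
  linarith

end Layers

section Diagonalization

open Matrix

variable {m : Type*} [Fintype m] [DecidableEq m] {P : Matrix m m ℝ}

theorem mem_unitary_of_transpose_mul_self (hP : Pᵀ * P = 1) : P ∈ unitary (Matrix m m ℝ) := by
  rw [← Matrix.unitaryGroup, Matrix.mem_unitaryGroup_iff', star_eq_conjTranspose,
    conjTranspose_eq_transpose_of_trivial, hP]

variable (P) in
noncomputable def conjDiagonal (hP : Pᵀ * P = 1) : (m → ℝ) →ₐ[ℝ] Matrix m m ℝ :=
  (Unitary.conjStarAlgAut ℝ (Matrix m m ℝ)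
    ⟨P, mem_unitary_of_transpose_mul_self hP⟩).toAlgEquiv.toAlgHom.comp (diagonalAlgHom ℝ)

theorem conjDiagonal_apply (hP : Pᵀ * P = 1) (d : m → ℝ) :
    conjDiagonal P hP d = P * diagonal d * Pᵀ := by
  simp [conjDiagonal, star_eq_conjTranspose, conjTranspose_eq_transpose_of_trivial]

theorem norm_conjDiagonal (hP : Pᵀ * P = 1) (d : m → ℝ) : ‖conjDiagonal P hP d‖ = ‖d‖ := by
  have hPu := mem_unitary_of_transpose_mul_self hP
  have hPtu : Pᵀ ∈ unitary (Matrix m m ℝ) := by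
    simpa [star_eq_conjTranspose, conjTranspose_eq_transpose_of_trivial] using
      Unitary.star_mem hPu
  rw [conjDiagonal_apply, CStarRing.norm_mul_mem_unitary _ hPtu,
    CStarRing.norm_mem_unitary_mul _ hPu, l2_opNorm_diagonal]

theorem norm_smul_conjDiagonal_sub_le (hP : Pᵀ * P = 1) {d : m → ℝ} {a b c : ℝ} (hc : 0 ≤ c)
    (h : ∀ i, |a * d i - b| ≤ c) : ‖a • conjDiagonal P hP d - b • 1‖ ≤ c := by
  rw [← map_one (conjDiagonal P hP), ← map_smul, ← map_smul, ← map_sub, norm_conjDiagonal]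
  exact (pi_norm_le_iff_of_nonneg hc).2 fun i => by simpa using h i

theorem exists_conjDiagonal_mulVec_eq_smul (hP : Pᵀ * P = 1) (d : m → ℝ) (i : m) :
    ∃ v, v ≠ 0 ∧ conjDiagonal P hP d *ᵥ v = d i • v := by
  refine ⟨P *ᵥ Pi.single i 1, fun h => ?_, ?_⟩
  · have h' : Pᵀ *ᵥ (P *ᵥ Pi.single i 1) = 0 := by rw [h, mulVec_zero]
    rw [mulVec_mulVec, hP, one_mulVec] at h'
    simpa using congrFun h' i
  · rw [conjDiagonal_apply, ← mulVec_mulVec, ← mulVec_mulVec, mulVec_mulVec _ Pᵀ P, hP,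
      one_mulVec, diagonal_mulVec_single, mul_one, ← mulVec_smul, ← Pi.single_smul, smul_eq_mul,
      mul_one]

theorem abs_le_l2_opNorm_of_exists_mulVec_eq_smul {A : Matrix m m ℝ} {β : ℝ}
    (h : ∃ v, v ≠ 0 ∧ A *ᵥ v = β • v) : |β| ≤ ‖A‖ := by
  obtain ⟨v, hv, hAv⟩ := h
  have h := Matrix.l2_opNorm_mulVec A (WithLp.toLp 2 v)
  rw [hAv] at h
  rw [show (EuclideanSpace.equiv m ℝ).symm (β • v) = β • WithLp.toLp 2 v from rfl, norm_smul,
    Real.norm_eq_abs] at h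
  exact le_of_mul_le_mul_right h (norm_pos_iff.2 (by simpa using hv))

end Diagonalization

theorem norm_iterLayers_sub_sub_le {n K : ℕ} (hK : 1 ≤ K) {W : ℕ → Matrix (Fin n) (Fin n) ℝ}
    {R A : ℕ → EuclideanSpace ℝ (Fin n) → EuclideanSpace ℝ (Fin n)}
    (hA : ∀ k u u', A k u - A k u' = toEuclideanLin (W k) (u - u'))
    (hR : ∀ k < K, ∀ z z', ‖(2 : ℝ) • (R k z - R k z') - (z - z')‖ ≤ ‖z - z'‖)
    {θ : ℕ → ℝ} (hθ0 : θ 0 = 1)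
    (hθ : ∀ k ≤ K - 1, θ (k + 1) = ∑ l ∈ Finset.range (k + 1), θ l * ‖matProdRange W l k‖)
    (x x' : EuclideanSpace ℝ (Fin n)) :
    ‖iterLayers R A K x - iterLayers R A K x' -
        (2⁻¹ : ℝ) ^ K •
          toEuclideanCLM (n := Fin n) (𝕜 := ℝ) (matProdRange W 0 (K - 1)) (x - x')‖ ≤
      (2⁻¹ : ℝ) ^ K * (2 * θ K - ‖matProdRange W 0 (K - 1)‖) * ‖x - x'‖ := by
  set Wc := fun k => toEuclideanCLM (n := Fin n) (𝕜 := ℝ) (W k)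
  have hprod : ∀ {l k}, l ≤ k →
      toEuclideanCLM (n := Fin n) (𝕜 := ℝ) (matProdRange W l k) = descProd Wc l (k + 1) :=
    fun hlk => by rw [matProdRange_eq_descProd W hlk, map_descProd]
  have hθ' : ∀ k < K, θ (k + 1) = ∑ l ∈ Finset.range (k + 1), θ l * ‖descProd Wc l (k + 1)‖ :=
    fun k hk => by
      rw [hθ k (by omega)]
      refine Finset.sum_congr rfl fun l hl => ?_
      rw [← l2_opNorm_toEuclideanCLM, hprod (Nat.lt_succ_iff.1 (Finset.mem_range.1 hl))]
  have hlayer : ∀ k < K, ∀ x x',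
      ‖(2 : ℝ) • (iterLayers R A (k + 1) x - iterLayers R A (k + 1) x') -
        Wc k (iterLayers R A k x - iterLayers R A k x')‖ ≤
      ‖Wc k (iterLayers R A k x - iterLayers R A k x')‖ := fun k hk x x' => by
    have h := hR k hk (A k (iterLayers R A k x)) (A k (iterLayers R A k x'))
    rw [hA] at h
    exact h
  rw [← l2_opNorm_toEuclideanCLM, hprod (Nat.zero_le _), Nat.sub_add_cancel hK]
  exact norm_layerError_le hK (fun _ => rfl) hlayer hθ0 hθ' x x'

theorem abs_sub_le_of_iRestNet_condition {K : ℕ} (hK : 1 ≤ K) {α θ ν βm βp d : ℝ}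
    (hα : α ≤ 1) (hdm : βm ≤ d) (hdp : d ≤ βp) (hd : |d| ≤ ν) (hβp : βp ≤ ν)
    (hcond : (βp + βm ≤ 0 ∧ θ ≤ (2 : ℝ) ^ (K - 1) * (2 * α - 1)) ∨
      (0 ≤ βp + βm ∧ βp + βm ≤ (2 : ℝ) ^ (K + 1) * (1 - α) ∧
        2 * θ ≤ βp + βm + (2 : ℝ) ^ K * (2 * α - 1)) ∨
      ((2 : ℝ) ^ (K + 1) * (1 - α) ≤ βp + βm ∧ θ ≤ (2 : ℝ) ^ (K - 1))) :
    |(2⁻¹ : ℝ) ^ K * d - (1 - α)| ≤ α - (2⁻¹ : ℝ) ^ K * (2 * θ - ν) := by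
  obtain ⟨k, rfl⟩ : ∃ k, K = k + 1 := ⟨K - 1, by omega⟩
  set t : ℝ := 2 ^ k
  have ht : 0 < t := by positivity
  have htα : t * α ≤ t := mul_le_of_le_one_right ht.le hα
  have hd' := abs_le.1 hd
  simp only [Nat.add_sub_cancel, pow_succ] at hcond
  have key : |d - 2 * t * (1 - α)| ≤ 2 * t * α - (2 * θ - ν) := by
    rw [abs_le]
    rcases hcond with ⟨-, h⟩ | ⟨-, h₁, h₂⟩ | ⟨h₁, h₂⟩ <;> constructor <;> linarith
  have h2t : (2⁻¹ : ℝ) ^ (k + 1) = (2 * t)⁻¹ := by rw [inv_pow, pow_succ, mul_comm]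
  rw [h2t, show (2 * t)⁻¹ * d - (1 - α) = (2 * t)⁻¹ * (d - 2 * t * (1 - α)) by field_simp,
    abs_mul, abs_of_pos (by positivity)]
  calc (2 * t)⁻¹ * |d - 2 * t * (1 - α)| ≤ (2 * t)⁻¹ * (2 * t * α - (2 * θ - ν)) := by gcongr
    _ = α - (2 * t)⁻¹ * (2 * θ - ν) := by field_simp

section Averaged

variable {E : Type*} [NormedAddCommGroup E] [NormedSpace ℝ E]

theorem exists_nonexpansive_of_norm_sub_le {T : E → E} {α : ℝ} (hα : 0 < α)
    (hT : ∀ x y, ‖T x - T y - (1 - α) • (x - y)‖ ≤ α * ‖x - y‖) :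
    ∃ R : E → E, (∀ x y, ‖R x - R y‖ ≤ ‖x - y‖) ∧ ∀ x, T x = (1 - α) • x + α • R x := by
  refine ⟨fun x => α⁻¹ • (T x - (1 - α) • x), fun x y => ?_, fun x => ?_⟩
  · rw [← smul_sub, norm_smul, Real.norm_of_nonneg (inv_nonneg.2 hα.le), inv_mul_le_iff₀ hα]
    rw [show T x - (1 - α) • x - (T y - (1 - α) • y) = T x - T y - (1 - α) • (x - y) by module]
    exact hT x y
  · rw [smul_smul, mul_inv_cancel₀ hα.ne', one_smul]
    abel

theorem norm_sub_smul_sub_le_of_approx {T : E → E} {a α ε : ℝ} {L : E →L[ℝ] E}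
    (hT : ∀ x y, ‖T x - T y - a • L (x - y)‖ ≤ ε * ‖x - y‖) (hL : ‖a • L - (1 - α) • 1‖ ≤ α - ε)
    (x y : E) : ‖T x - T y - (1 - α) • (x - y)‖ ≤ α * ‖x - y‖ :=
  calc _ = ‖(T x - T y - a • L (x - y)) + (a • L - (1 - α) • 1) (x - y)‖ := by
        congr 1
        simp only [_root_.sub_apply, _root_.smul_apply, one_apply_eq_self]
        abel
    _ ≤ ε * ‖x - y‖ + (α - ε) * ‖x - y‖ :=
        norm_add_le_of_le (hT x y) ((a • L - (1 - α) • 1).le_of_opNorm_le hL _)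
    _ = α * ‖x - y‖ := by ring

end Averaged

theorem iRestNet_averaged_general {n p K : ℕ} (hK : 1 ≤ K) (α : ℝ)
    (hα : α ∈ Set.Icc (1 / 2 : ℝ) 1) (y : EuclideanSpace ℝ (Fin n))
    (γ lam μ : ℕ → ℝ)
    (hγ : ∀ k, k ≤ K - 1 → 0 < γ k) (hμ : ∀ k, k ≤ K - 1 → 0 < μ k)
    (H D P : Matrix (Fin n) (Fin n) ℝ) (hP : Pᵀ * P = 1) (βH βD : Fin n → ℝ)
    (hH : Hᵀ * H = P * Matrix.diagonal βH * Pᵀ)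
    (hD : Dᵀ * D = P * Matrix.diagonal βD * Pᵀ)
    (c : Fin p → EuclideanSpace ℝ (Fin n) → ℝ)
    (hc_convex : ∀ i, ConvexOn ℝ Set.univ (fun x => -(c i x)))
    (hc_int : ∃ x : EuclideanSpace ℝ (Fin n), ∀ i, 0 < c i x)
    (W : ℕ → Matrix (Fin n) (Fin n) ℝ)
    (hW : ∀ k, W k = 1 - γ k • (Hᵀ * H + lam k • (Dᵀ * D)))
    (A R : ℕ → EuclideanSpace ℝ (Fin n) → EuclideanSpace ℝ (Fin n))
    (hA : ∀ k x, A k x = Matrix.toEuclideanLin (W k) x +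
      γ k • Matrix.toEuclideanLin Hᵀ y)
    (hR : ∀ k, k ≤ K - 1 → ∀ z u : EuclideanSpace ℝ (Fin n), u ≠ R k z →
      ((1 / 2 * ‖z - R k z‖ ^ 2 : ℝ) : EReal) +
          ((γ k * μ k : ℝ) : EReal) * logBarrier c (R k z) <
        ((1 / 2 * ‖z - u‖ ^ 2 : ℝ) : EReal) +
          ((γ k * μ k : ℝ) : EReal) * logBarrier c u)
    (βm βp : ℝ)
    (hβm : (∃ v : Fin n → ℝ, v ≠ 0 ∧ (matProdRange W 0 (K - 1)).mulVec v = βm • v) ∧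
      ∀ β : ℝ, (∃ v : Fin n → ℝ, v ≠ 0 ∧ (matProdRange W 0 (K - 1)).mulVec v = β • v) →
        βm ≤ β)
    (hβp : (∃ v : Fin n → ℝ, v ≠ 0 ∧ (matProdRange W 0 (K - 1)).mulVec v = βp • v) ∧
      ∀ β : ℝ, (∃ v : Fin n → ℝ, v ≠ 0 ∧ (matProdRange W 0 (K - 1)).mulVec v = β • v) →
        β ≤ βp)
    (θ : ℕ → ℝ) (hθ0 : θ 0 = 1)
    (hθ : ∀ k, k ≤ K - 1 →
      θ (k + 1) = ∑ l ∈ Finset.range (k + 1), θ l * ‖matProdRange W l k‖)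
    (hcond :
      (βp + βm ≤ 0 ∧ θ K ≤ (2 : ℝ) ^ (K - 1) * (2 * α - 1)) ∨
      (0 ≤ βp + βm ∧ βp + βm ≤ (2 : ℝ) ^ (K + 1) * (1 - α) ∧
        2 * θ K ≤ βp + βm + (2 : ℝ) ^ K * (2 * α - 1)) ∨
      ((2 : ℝ) ^ (K + 1) * (1 - α) ≤ βp + βm ∧ θ K ≤ (2 : ℝ) ^ (K - 1))) :
    ∃ Rne : EuclideanSpace ℝ (Fin n) → EuclideanSpace ℝ (Fin n),
      (∀ x y' : EuclideanSpace ℝ (Fin n), ‖Rne x - Rne y'‖ ≤ ‖x - y'‖) ∧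
      ∀ x : EuclideanSpace ℝ (Fin n),
        iterLayers R A K x = (1 - α) • x + α • Rne x := by
  obtain ⟨hα₀, hα₁⟩ := hα
  have herr := norm_iterLayers_sub_sub_le hK (R := R) (A := A)
    (fun k u u' => by rw [hA, hA, add_sub_add_right_eq_sub, map_sub])
    (fun k hk => norm_two_smul_sub_le_of_logBarrier_prox hc_convex hc_int
      (mul_pos (hγ k (by omega)) (hμ k (by omega))) (hR k (by omega))) hθ0 hθ
  set d := descProd (fun k => 1 - γ k • (βH + lam k • βD)) 0 K
  have hMd : matProdRange W 0 (K - 1) = conjDiagonal P hP d := by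
    have hW' : W = fun k => conjDiagonal P hP (1 - γ k • (βH + lam k • βD)) := by
      ext1 k
      simp only [hW, hH, hD, map_sub, map_one, map_smul, map_add, conjDiagonal_apply]
    rw [matProdRange_eq_descProd W (Nat.zero_le _), Nat.sub_add_cancel hK, hW']
    exact (map_descProd _ _ _ _).symm
  set M := matProdRange W 0 (K - 1)
  have heig : ∀ i, ∃ v, v ≠ 0 ∧ M *ᵥ v = d i • v := fun i =>
    hMd ▸ exists_conjDiagonal_mulVec_eq_smul hP d i
  have hbudget : ∀ i, |(2⁻¹ : ℝ) ^ K * d i - (1 - α)| ≤ α - (2⁻¹ : ℝ) ^ K * (2 * θ K - ‖M‖) :=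
    fun i => abs_sub_le_of_iRestNet_condition hK hα₁ (hβm.2 _ (heig i)) (hβp.2 _ (heig i))
      (abs_le_l2_opNorm_of_exists_mulVec_eq_smul (heig i))
      ((le_abs_self _).trans (abs_le_l2_opNorm_of_exists_mulVec_eq_smul hβp.1)) hcond
  obtain ⟨v, hv, -⟩ := hβp.1
  obtain ⟨i, -⟩ := Function.ne_iff.1 hv
  have hL := norm_smul_conjDiagonal_sub_le hP ((abs_nonneg _).trans (hbudget i)) hbudget
  rw [← hMd, ← l2_opNorm_toEuclideanCLM, map_sub, map_smul, map_smul, map_one] at hL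
  exact exists_nonexpansive_of_norm_sub_le (by linarith) (norm_sub_smul_sub_le_of_approx herr hL)

theorem iRestNet_averaged {n p K : ℕ} (hK : 1 ≤ K) (α : ℝ)
    (hα : α ∈ Set.Icc (1 / 2 : ℝ) 1) (y : EuclideanSpace ℝ (Fin n))
    (γ lam μ : ℕ → ℝ)
    (hγ : ∀ k, k ≤ K - 1 → 0 < γ k) (hlam : ∀ k, k ≤ K - 1 → 0 < lam k)
    (hμ : ∀ k, k ≤ K - 1 → 0 < μ k)
    (H D P : Matrix (Fin n) (Fin n) ℝ) (hP : Pᵀ * P = 1) (βH βD : Fin n → ℝ)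
    (hH : Hᵀ * H = P * Matrix.diagonal βH * Pᵀ)
    (hD : Dᵀ * D = P * Matrix.diagonal βD * Pᵀ)
    (c : Fin p → EuclideanSpace ℝ (Fin n) → ℝ)
    (hc_convex : ∀ i, ConvexOn ℝ Set.univ (fun x => -(c i x)))
    (hc_lsc : ∀ i, LowerSemicontinuous (fun x => -(c i x)))
    (hc_int : ∃ x : EuclideanSpace ℝ (Fin n), ∀ i, 0 < c i x)
    (W : ℕ → Matrix (Fin n) (Fin n) ℝ)
    (hW : ∀ k, W k = 1 - γ k • (Hᵀ * H + lam k • (Dᵀ * D)))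
    (A R : ℕ → EuclideanSpace ℝ (Fin n) → EuclideanSpace ℝ (Fin n))
    (hA : ∀ k x, A k x = Matrix.toEuclideanLin (W k) x +
      γ k • Matrix.toEuclideanLin Hᵀ y)
    (hR : ∀ k, k ≤ K - 1 → ∀ z u : EuclideanSpace ℝ (Fin n), u ≠ R k z →
      ((1 / 2 * ‖z - R k z‖ ^ 2 : ℝ) : EReal) +
          ((γ k * μ k : ℝ) : EReal) * logBarrier c (R k z) <
        ((1 / 2 * ‖z - u‖ ^ 2 : ℝ) : EReal) +
          ((γ k * μ k : ℝ) : EReal) * logBarrier c u)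
    (βm βp : ℝ)
    (hβm : (∃ v : Fin n → ℝ, v ≠ 0 ∧ (matProdRange W 0 (K - 1)).mulVec v = βm • v) ∧
      ∀ β : ℝ, (∃ v : Fin n → ℝ, v ≠ 0 ∧ (matProdRange W 0 (K - 1)).mulVec v = β • v) →
        βm ≤ β)
    (hβp : (∃ v : Fin n → ℝ, v ≠ 0 ∧ (matProdRange W 0 (K - 1)).mulVec v = βp • v) ∧
      ∀ β : ℝ, (∃ v : Fin n → ℝ, v ≠ 0 ∧ (matProdRange W 0 (K - 1)).mulVec v = β • v) →
        β ≤ βp)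
    (θ : ℕ → ℝ) (hθ0 : θ 0 = 1)
    (hθ : ∀ k, k ≤ K - 1 →
      θ (k + 1) = ∑ l ∈ Finset.range (k + 1), θ l * ‖matProdRange W l k‖)
    (hcond :
      (βp + βm ≤ 0 ∧ θ K ≤ (2 : ℝ) ^ (K - 1) * (2 * α - 1)) ∨
      (0 ≤ βp + βm ∧ βp + βm ≤ (2 : ℝ) ^ (K + 1) * (1 - α) ∧
        2 * θ K ≤ βp + βm + (2 : ℝ) ^ K * (2 * α - 1)) ∨
      ((2 : ℝ) ^ (K + 1) * (1 - α) ≤ βp + βm ∧ θ K ≤ (2 : ℝ) ^ (K - 1))) :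
    ∃ Rne : EuclideanSpace ℝ (Fin n) → EuclideanSpace ℝ (Fin n),
      (∀ x y' : EuclideanSpace ℝ (Fin n), ‖Rne x - Rne y'‖ ≤ ‖x - y'‖) ∧
      ∀ x : EuclideanSpace ℝ (Fin n),
        iterLayers R A K x = (1 - α) • x + α • Rne x :=
  iRestNet_averaged_general hK α hα y γ lam μ hγ hμ H D P hP βH βD hH hD c hc_convex hc_int W hW A R
    hA hR βm βp hβm hβp θ hθ0 hθ hcond
end
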